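/- arXiv:1807.07339 — 6 statements merged into one kernel-verified Lean document; each statement's English description precedes it below -/
import Mathlib

section
/- Let G be a finite bipartite simple graph with edge set E. A vector x ∈ ℝ^E belongs to the perfect matching polytope Poly(G) if and only if x is non-negative and 1-regular. -/
/-!
A non-negative 1-regular `x` on a graph with bipartition `s`, `sᶜ` is a doubly stochastic
`s × sᶜ` matrix supported on the edges; double counting its total weight gives `|s| = |sᶜ|`, so
after identifying the two sides the matrix is square and Birkhoff–von Neumann writes it as a
convex combination of permutation matrices. A permutation of positive weight only uses positive
entries, hence edges of `G`, so it is a perfect matching. Conversely, the non-negative 1-regular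
vectors form a convex set containing the incidence vector of every perfect matching.
-/

open SimpleGraph

variable {V : Type*}

/-- The incidence vector (in ℝ^E) of the edge set of a subgraph `M`. -/
noncomputable def incidenceVector (G : SimpleGraph V) (M : G.Subgraph) : G.edgeSet → ℝ :=
  fun e => M.edgeSet.indicator (fun _ => (1 : ℝ)) ↑e

/-- The perfect matching polytope: the convex hull of the incidence vectors
of the perfect matchings of `G`. -/
def matchingPolytope (G : SimpleGraph V) : Set (G.edgeSet → ℝ) :=
  convexHull ℝ {x | ∃ M : G.Subgraph, M.IsPerfectMatching ∧ x = incidenceVector G M}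

/-- A vector x ∈ ℝ^E is 1-regular if at every vertex the incident coordinates sum to 1. -/
def OneRegular (G : SimpleGraph V) [Fintype V] [DecidableEq V] [DecidableRel G.Adj]
    (x : G.edgeSet → ℝ) : Prop :=
  ∀ v : V, ∑ e : G.edgeSet, (if v ∈ (e : Sym2 V) then x e else 0) = 1

open Finset

lemma sum_smul_mem_convexHull_of_ne_zero {R E ι : Type*} [Field R] [LinearOrder R]
    [IsStrictOrderedRing R] [AddCommGroup E] [Module R E] [Fintype ι] {S : Set E}
    {w : ι → R} {z : ι → E} (hw₀ : ∀ i, 0 ≤ w i) (hw₁ : ∑ i, w i = 1)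
    (hz : ∀ i, w i ≠ 0 → z i ∈ S) : ∑ i, w i • z i ∈ convexHull R S := by
  classical
  rw [← sum_filter_of_ne (p := fun i => w i ≠ 0) fun i _ h hw => h (by rw [hw, zero_smul])]
  refine (convex_convexHull R S).sum_mem (fun i _ => hw₀ i) ?_
    fun i hi => subset_convexHull R S (hz i (mem_filter.mp hi).2)
  rwa [sum_filter_ne_zero]

namespace SimpleGraph

lemma Colorable.exists_isBipartiteWith_compl {G : SimpleGraph V} (h : G.Colorable 2) :
    ∃ s : Set V, G.IsBipartiteWith s sᶜ := by
  obtain ⟨c⟩ := h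
  refine ⟨{v | c v = 0}, ⟨disjoint_compl_right, fun v w hvw => ?_⟩⟩
  have := c.valid hvw
  simp only [Set.mem_compl_iff, Set.mem_ofPred_eq]
  omega

lemma incidenceVector_nonneg {G : SimpleGraph V} (M : G.Subgraph) (e : G.edgeSet) :
    0 ≤ incidenceVector G M e :=
  Set.indicator_nonneg (fun _ _ => zero_le_one) _

section EdgeWeight

variable {G : SimpleGraph V} [DecidableRel G.Adj]

noncomputable def edgeWeight (x : G.edgeSet → ℝ) (u v : V) : ℝ :=
  if h : G.Adj u v then x ⟨s(u, v), h⟩ else 0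

lemma edgeWeight_of_adj (x : G.edgeSet → ℝ) {u v : V} (h : G.Adj u v) :
    edgeWeight x u v = x ⟨s(u, v), h⟩ :=
  dif_pos h

lemma edgeWeight_of_not_adj (x : G.edgeSet → ℝ) {u v : V} (h : ¬G.Adj u v) :
    edgeWeight x u v = 0 :=
  dif_neg h

lemma edgeWeight_comm (x : G.edgeSet → ℝ) (u v : V) : edgeWeight x u v = edgeWeight x v u := by
  by_cases h : G.Adj u v
  · rw [edgeWeight_of_adj x h, edgeWeight_of_adj x h.symm]
    exact congrArg x (Subtype.ext Sym2.eq_swap)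
  · rw [edgeWeight_of_not_adj x h, edgeWeight_of_not_adj x (mt G.adj_symm h)]

lemma edgeWeight_nonneg {x : G.edgeSet → ℝ} (hx : ∀ e, 0 ≤ x e) (u v : V) :
    0 ≤ edgeWeight x u v := by
  unfold edgeWeight
  split_ifs
  exacts [hx _, le_rfl]

lemma edgeWeight_sum_smul {ι : Type*} (t : Finset ι) (w : ι → ℝ) (z : ι → G.edgeSet → ℝ)
    (u v : V) : edgeWeight (∑ i ∈ t, w i • z i) u v = ∑ i ∈ t, w i * edgeWeight (z i) u v := by
  by_cases h : G.Adj u v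
  · simp only [edgeWeight_of_adj _ h, Finset.sum_apply, Pi.smul_apply, smul_eq_mul]
  · simp only [edgeWeight_of_not_adj _ h, mul_zero, sum_const_zero]

lemma edgeWeight_incidenceVector (M : G.Subgraph) (u v : V) [Decidable (M.Adj u v)] :
    edgeWeight (incidenceVector G M) u v = if M.Adj u v then 1 else 0 := by
  by_cases h : G.Adj u v
  · rw [edgeWeight_of_adj _ h]
    by_cases hM : M.Adj u v
    · rw [if_pos hM]
      exact Set.indicator_of_mem (M.mem_edgeSet.mpr hM) _
    · rw [if_neg hM]
      exact Set.indicator_of_notMem (mt M.mem_edgeSet.mp hM) _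
  · rw [edgeWeight_of_not_adj _ h, if_neg (mt M.adj_sub h)]

lemma sum_incident_eq_sum_edgeWeight [Fintype V] [DecidableEq V] (x : G.edgeSet → ℝ) (v : V) :
    ∑ e : G.edgeSet, (if v ∈ (e : Sym2 V) then x e else 0) = ∑ w, edgeWeight x v w := by
  have incident (e : G.edgeSet) :
      (if v ∈ (e : Sym2 V) then x e else 0) = ∑ w, if (e : Sym2 V) = s(v, w) then x e else 0 := by
    by_cases hv : v ∈ (e : Sym2 V)
    · obtain ⟨w₀, hw₀⟩ := Sym2.mem_iff_exists.mp hv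
      rw [if_pos hv]
      simp only [hw₀, Sym2.congr_right, sum_ite_eq, mem_univ, if_true]
    · rw [if_neg hv]
      refine (sum_eq_zero fun w _ => if_neg fun (he : (e : Sym2 V) = s(v, w)) => ?_).symm
      exact hv (he ▸ Sym2.mem_mk_left v w)
  have edge (w : V) : ∑ e : G.edgeSet, (if (e : Sym2 V) = s(v, w) then x e else 0) =
      edgeWeight x v w := by
    by_cases h : G.Adj v w
    · rw [edgeWeight_of_adj x h, sum_eq_single_of_mem ⟨s(v, w), h⟩ (mem_univ _), if_pos rfl]
      exact fun e _ hne => if_neg fun he => hne (Subtype.ext he)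
    · rw [edgeWeight_of_not_adj x h]
      exact sum_eq_zero fun e _ => if_neg fun (he : (e : Sym2 V) = s(v, w)) =>
        h (G.mem_edgeSet.mp (he ▸ e.2))
  rw [sum_congr rfl fun e _ => incident e, sum_comm]
  exact sum_congr rfl fun w _ => edge w

lemma oneRegular_iff [Fintype V] [DecidableEq V] {x : G.edgeSet → ℝ} :
    OneRegular G x ↔ ∀ v, ∑ w, edgeWeight x v w = 1 := by
  simp only [OneRegular, sum_incident_eq_sum_edgeWeight]

variable [Fintype V] [DecidableEq V]

lemma Subgraph.IsPerfectMatching.oneRegular_incidenceVector {M : G.Subgraph}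
    (hM : M.IsPerfectMatching) : OneRegular G (incidenceVector G M) := by
  classical
  refine oneRegular_iff.mpr fun v => ?_
  obtain ⟨w, hvw, hunique⟩ := Subgraph.isPerfectMatching_iff.mp hM v
  have hpartner (u : V) : M.Adj v u ↔ w = u := ⟨fun h => (hunique u h).symm, fun h => h ▸ hvw⟩
  simp only [edgeWeight_incidenceVector, hpartner, sum_ite_eq, mem_univ, if_true]

lemma convex_setOf_nonneg_oneRegular :
    Convex ℝ {x : G.edgeSet → ℝ | (∀ e, 0 ≤ x e) ∧ OneRegular G x} := by
  rintro y ⟨hy₀, hy₁⟩ z ⟨hz₀, hz₁⟩ a b ha hb hab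
  refine ⟨fun e => add_nonneg (mul_nonneg ha (hy₀ e)) (mul_nonneg hb (hz₀ e)), fun v => ?_⟩
  calc ∑ e : G.edgeSet, (if v ∈ (e : Sym2 V) then (a • y + b • z) e else 0)
      = a * ∑ e : G.edgeSet, (if v ∈ (e : Sym2 V) then y e else 0)
        + b * ∑ e : G.edgeSet, (if v ∈ (e : Sym2 V) then z e else 0) := by
        simp only [mul_sum, ← sum_add_distrib, mul_ite, mul_zero, ← ite_add_zero]
        rfl
    _ = 1 := by rw [hy₁ v, hz₁ v, mul_one, mul_one, hab]

lemma matchingPolytope_subset_nonneg_oneRegular :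
    matchingPolytope G ⊆ {x | (∀ e, 0 ≤ x e) ∧ OneRegular G x} :=
  convexHull_min
    (by rintro _ ⟨M, hM, rfl⟩; exact ⟨incidenceVector_nonneg M, hM.oneRegular_incidenceVector⟩)
    convex_setOf_nonneg_oneRegular

end EdgeWeight

def Subgraph.ofInvolutive (G : SimpleGraph V) {p : V → V} (hp : Function.Involutive p) :
    G.Subgraph where
  verts := Set.univ
  Adj u v := G.Adj u v ∧ p u = v
  adj_sub h := h.1
  edge_vert _ := Set.mem_univ _
  symm := ⟨fun u _ ⟨h, huv⟩ => ⟨h.symm, huv ▸ hp u⟩⟩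

variable {G : SimpleGraph V} {p : V → V} (hp : Function.Involutive p)

lemma Subgraph.ofInvolutive_adj {u v : V} :
    (Subgraph.ofInvolutive G hp).Adj u v ↔ G.Adj u v ∧ p u = v :=
  Iff.rfl

lemma Subgraph.isPerfectMatching_ofInvolutive (hG : ∀ v, G.Adj v (p v)) :
    (Subgraph.ofInvolutive G hp).IsPerfectMatching :=
  Subgraph.isPerfectMatching_iff.mpr fun v =>
    ⟨p v, (ofInvolutive_adj hp).mpr ⟨hG v, rfl⟩, fun _ h => ((ofInvolutive_adj hp).mp h).2.symm⟩

end SimpleGraph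

namespace Equiv

variable {s : Set V} [DecidablePred (· ∈ s)]

def complInvolution (f : s ≃ ↥sᶜ) (v : V) : V :=
  if h : v ∈ s then f ⟨v, h⟩ else f.symm ⟨v, h⟩

lemma complInvolution_of_mem (f : s ≃ ↥sᶜ) (a : s) : f.complInvolution a = f a :=
  dif_pos a.2

lemma complInvolution_of_mem_compl (f : s ≃ ↥sᶜ) (b : ↥sᶜ) : f.complInvolution b = f.symm b :=
  dif_neg b.2

lemma complInvolution_involutive (f : s ≃ ↥sᶜ) : Function.Involutive f.complInvolution := by
  intro v
  by_cases h : v ∈ s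
  · lift v to s using h
    rw [complInvolution_of_mem, complInvolution_of_mem_compl, symm_apply_apply]
  · lift v to ↥sᶜ using h
    rw [complInvolution_of_mem_compl, complInvolution_of_mem, apply_symm_apply]

lemma adj_complInvolution {G : SimpleGraph V} (f : s ≃ ↥sᶜ) (hf : ∀ a : s, G.Adj a (f a))
    (v : V) : G.Adj v (f.complInvolution v) := by
  by_cases h : v ∈ s
  · lift v to s using h
    rw [complInvolution_of_mem]
    exact hf v
  · lift v to ↥sᶜ using h
    rw [complInvolution_of_mem_compl]
    simpa using (hf (f.symm v)).symm

end Equiv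

namespace SimpleGraph

section Bipartite

variable {G : SimpleGraph V} [DecidableRel G.Adj] {s : Set V} {x : G.edgeSet → ℝ}

lemma IsBipartiteWith.ext_of_edgeWeight (hs : G.IsBipartiteWith s sᶜ) {y z : G.edgeSet → ℝ}
    (h : ∀ a b, a ∈ s → b ∉ s → G.Adj a b → edgeWeight y a b = edgeWeight z a b) : y = z := by
  funext ⟨e, he⟩
  induction e using Sym2.ind with
  | h u v =>
    have huv : G.Adj u v := he
    rw [← edgeWeight_of_adj y huv, ← edgeWeight_of_adj z huv]
    rcases hs.mem_of_adj huv with ⟨hu, hv⟩ | ⟨hu, hv⟩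
    · exact h u v hu hv huv
    · rw [edgeWeight_comm y, edgeWeight_comm z]
      exact h v u hv hu huv.symm

variable [Fintype V]

lemma sum_subtype_edgeWeight_of_adj_mem (x : G.edgeSet → ℝ) {t : Set V} [DecidablePred (· ∈ t)]
    {v : V} (ht : ∀ w, G.Adj v w → w ∈ t) : ∑ w : t, edgeWeight x v w = ∑ w, edgeWeight x v w := by
  rw [← sum_subtype (univ.filter (· ∈ t)) (by simp), sum_filter_of_ne]
  exact fun w _ hw => by_contra fun hwt => hw (edgeWeight_of_not_adj x (mt (ht w) hwt))

variable [DecidablePred (· ∈ s)]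

lemma IsBipartiteWith.sum_edgeWeight_compl_of_mem (hs : G.IsBipartiteWith s sᶜ)
    (x : G.edgeSet → ℝ) {a : V} (ha : a ∈ s) :
    ∑ b : ↥sᶜ, edgeWeight x a b = ∑ w, edgeWeight x a w :=
  sum_subtype_edgeWeight_of_adj_mem x fun _ h => hs.mem_of_mem_adj ha h

lemma IsBipartiteWith.sum_edgeWeight_of_mem_compl (hs : G.IsBipartiteWith s sᶜ)
    (x : G.edgeSet → ℝ) {b : V} (hb : b ∉ s) :
    ∑ a : s, edgeWeight x a b = ∑ w, edgeWeight x b w := by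
  simp only [edgeWeight_comm x _ b]
  exact sum_subtype_edgeWeight_of_adj_mem x fun _ h => hs.symm.mem_of_mem_adj hb h

variable [DecidableEq V]

lemma IsBipartiteWith.nonempty_equiv_compl (hs : G.IsBipartiteWith s sᶜ) (hx : OneRegular G x) :
    Nonempty (s ≃ ↥sᶜ) := by
  rw [oneRegular_iff] at hx
  refine Fintype.card_eq.mp (Nat.cast_injective (R := ℝ) ?_)
  calc (Fintype.card s : ℝ)
      = ∑ a : s, ∑ b : ↥sᶜ, edgeWeight x a b := by
        simp only [fun a : s => hs.sum_edgeWeight_compl_of_mem x a.2, hx, sum_const, card_univ,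
          nsmul_eq_mul, mul_one]
    _ = ∑ b : ↥sᶜ, ∑ a : s, edgeWeight x a b := sum_comm
    _ = Fintype.card ↥sᶜ := by
        simp only [fun b : ↥sᶜ => hs.sum_edgeWeight_of_mem_compl x b.2, hx, sum_const, card_univ,
          nsmul_eq_mul, mul_one]

lemma IsBipartiteWith.mem_doublyStochastic (hs : G.IsBipartiteWith s sᶜ) (hx₀ : ∀ e, 0 ≤ x e)
    (hx : OneRegular G x) (φ : s ≃ ↥sᶜ) :
    Matrix.of (fun a a' : s => edgeWeight x a (φ a')) ∈ doublyStochastic ℝ s := by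
  rw [oneRegular_iff] at hx
  refine mem_doublyStochastic_iff_sum.mpr
    ⟨fun _ _ => edgeWeight_nonneg hx₀ _ _, fun a => ?_, fun a' => ?_⟩ <;>
    simp only [Matrix.of_apply]
  · rw [φ.sum_comp (fun b : ↥sᶜ => edgeWeight x a b), hs.sum_edgeWeight_compl_of_mem x a.2, hx]
  · rw [hs.sum_edgeWeight_of_mem_compl x (φ a').2, hx]

lemma IsBipartiteWith.exists_edgeWeight_eq_sum_perm (hs : G.IsBipartiteWith s sᶜ)
    (hx₀ : ∀ e, 0 ≤ x e) (hx : OneRegular G x) (φ : s ≃ ↥sᶜ) :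
    ∃ w : Equiv.Perm s → ℝ, (∀ σ, 0 ≤ w σ) ∧ ∑ σ, w σ = 1 ∧
      ∀ (a : s) (b : ↥sᶜ), edgeWeight x a b = ∑ σ, if φ (σ a) = b then w σ else 0 := by
  obtain ⟨w, hw₀, hw₁, hN⟩ :=
    exists_eq_sum_perm_of_mem_doublyStochastic (hs.mem_doublyStochastic hx₀ hx φ)
  refine ⟨w, hw₀, hw₁, fun a b => ?_⟩
  have hentry := congr_fun (congr_fun hN a) (φ.symm b)
  simp only [Matrix.sum_apply, Matrix.smul_apply, PEquiv.toMatrix_apply, Equiv.toPEquiv_apply,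
    Option.mem_def, Option.some.injEq, Equiv.eq_symm_apply, smul_eq_mul, mul_ite, mul_one,
    mul_zero, Matrix.of_apply, Equiv.apply_symm_apply] at hentry
  exact hentry.symm

lemma adj_of_edgeWeight_eq_sum_perm {φ : s ≃ ↥sᶜ} {w : Equiv.Perm s → ℝ} (hw₀ : ∀ σ, 0 ≤ w σ)
    (hxw : ∀ (a : s) (b : ↥sᶜ), edgeWeight x a b = ∑ σ, if φ (σ a) = b then w σ else 0)
    {σ : Equiv.Perm s} (hσ : w σ ≠ 0) (a : s) : G.Adj a (φ (σ a)) := by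
  by_contra hadj
  have hzero := (edgeWeight_of_not_adj x hadj).symm.trans (hxw a (φ (σ a)))
  rw [eq_comm, sum_eq_zero_iff_of_nonneg fun τ _ => by split_ifs; exacts [hw₀ τ, le_rfl]] at hzero
  exact hσ (by simpa using hzero σ (mem_univ σ))

theorem IsBipartiteWith.mem_matchingPolytope (hs : G.IsBipartiteWith s sᶜ) (hx₀ : ∀ e, 0 ≤ x e)
    (hx : OneRegular G x) : x ∈ matchingPolytope G := by
  obtain ⟨φ⟩ := hs.nonempty_equiv_compl hx
  obtain ⟨w, hw₀, hw₁, hxw⟩ := hs.exists_edgeWeight_eq_sum_perm hx₀ hx φ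
  let M (σ : Equiv.Perm s) : G.Subgraph :=
    Subgraph.ofInvolutive G (σ.trans φ).complInvolution_involutive
  have hx_eq : x = ∑ σ, w σ • incidenceVector G (M σ) := by
    refine hs.ext_of_edgeWeight fun a b ha hb hab => ?_
    rw [edgeWeight_sum_smul, hxw ⟨a, ha⟩ ⟨b, hb⟩]
    refine sum_congr rfl fun σ _ => ?_
    have hpartner : (σ.trans φ).complInvolution a = φ (σ ⟨a, ha⟩) :=
      (σ.trans φ).complInvolution_of_mem ⟨a, ha⟩
    classical
    rw [edgeWeight_incidenceVector]
    simp only [M, Subgraph.ofInvolutive_adj, hpartner, hab, true_and, mul_ite, mul_one, mul_zero,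
      Subtype.ext_iff]
  rw [matchingPolytope, hx_eq]
  refine sum_smul_mem_convexHull_of_ne_zero hw₀ hw₁ fun σ hσ =>
    ⟨M σ, Subgraph.isPerfectMatching_ofInvolutive _ ?_, rfl⟩
  exact (σ.trans φ).adj_complInvolution fun a => adj_of_edgeWeight_eq_sum_perm hw₀ hxw hσ a

end Bipartite

end SimpleGraph

/-- Birkhoff, von Neumann: for a finite bipartite simple graph, a vector in ℝ^E
belongs to the perfect matching polytope iff it is non-negative and 1-regular. -/
theorem bipartite_matchingPolytope_iff [Fintype V] [DecidableEq V]
    (G : SimpleGraph V) [DecidableRel G.Adj] (hbip : G.Colorable 2)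
    (x : G.edgeSet → ℝ) :
    x ∈ matchingPolytope G ↔ ((∀ e, 0 ≤ x e) ∧ OneRegular G x) := by
  classical
  obtain ⟨s, hs⟩ := hbip.exists_isBipartiteWith_compl
  exact ⟨fun hx => matchingPolytope_subset_nonneg_oneRegular hx,
    fun ⟨hx₀, hx⟩ => hs.mem_matchingPolytope hx₀ hx⟩
end

section
/- Let G be a matching covered finite simple graph with minimum degree at least three. If G has a nontrivial tight cut, then G has a nontrivial tight cut ∂(Y) with |∂(Y)| ≥ 3. -/
open SimpleGraph

variable {V : Type*}

/-- A matching covered graph: connected, at least two vertices,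
and every edge lies in some perfect matching. -/
def MatchingCovered (G : SimpleGraph V) [Fintype V] : Prop :=
  G.Connected ∧ 2 ≤ Fintype.card V ∧
    ∀ e ∈ G.edgeSet, ∃ M : G.Subgraph, M.IsPerfectMatching ∧ e ∈ M.edgeSet

/-- The cut ∂(S): edges of `G` with exactly one end in `S`. -/
def cutEdges (G : SimpleGraph V) (S : Set V) : Set (Sym2 V) :=
  {e | e ∈ G.edgeSet ∧ ∃ a b, e = s(a, b) ∧ a ∈ S ∧ b ∉ S}

/-- A tight cut: every perfect matching contains exactly one edge of ∂(S). -/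
def IsTightCut (G : SimpleGraph V) (S : Set V) : Prop :=
  ∀ M : G.Subgraph, M.IsPerfectMatching → ∃! e, e ∈ M.edgeSet ∧ e ∈ cutEdges G S

/-- A nontrivial cut: both shores have at least two vertices. -/
def IsNontrivialCut (S : Set V) : Prop := 2 ≤ S.ncard ∧ 2 ≤ Sᶜ.ncard

-- cut of complement equals cut
lemma cutEdges_compl (G : SimpleGraph V) (S : Set V) :
    cutEdges G Sᶜ = cutEdges G S := by
  ext e
  constructor
  · rintro ⟨he, a, b, rfl, ha, hb⟩
    exact ⟨he, b, a, Sym2.eq_swap, by simpa using hb, by simpa using ha⟩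
  · rintro ⟨he, a, b, rfl, ha, hb⟩
    exact ⟨he, b, a, Sym2.eq_swap, hb, by simpa using ha⟩

lemma isTightCut_compl {G : SimpleGraph V} {S : Set V} (h : IsTightCut G S) :
    IsTightCut G Sᶜ := by
  intro M hM
  simpa only [cutEdges_compl] using h M hM

-- a walk from inside S to outside S crosses S
lemma walk_cross {G : SimpleGraph V} {S : Set V} {u v : V} (p : G.Walk u v)
    (hu : u ∈ S) (hv : v ∉ S) : ∃ a b, G.Adj a b ∧ a ∈ S ∧ b ∉ S := by
  induction p with
  | nil => exact absurd hu hv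
  | @cons x y z h p ih =>
    by_cases hy : y ∈ S
    · exact ih hy hv
    · exact ⟨x, y, h, hu, hy⟩

lemma cut_nonempty {G : SimpleGraph V} {S : Set V} (hc : G.Connected)
    (hS : S.Nonempty) (hS' : Sᶜ.Nonempty) : (cutEdges G S).Nonempty := by
  obtain ⟨u, hu⟩ := hS
  obtain ⟨v, hv⟩ := hS'
  obtain ⟨p⟩ := hc.preconnected u v
  obtain ⟨a, b, hab, ha, hb⟩ := walk_cross p hu hv
  exact ⟨s(a, b), (G.mem_edgeSet).mpr hab, a, b, rfl, ha, hb⟩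

-- a vertex of degree ≥ 3 has a neighbor avoiding two given vertices
lemma exists_third_neighbor {G : SimpleGraph V} [Fintype V] [DecidableEq V]
    [DecidableRel G.Adj] (hdeg : ∀ v : V, 3 ≤ G.degree v) (a b1 b2 : V) :
    ∃ c, G.Adj a c ∧ c ≠ b1 ∧ c ≠ b2 := by
  by_contra hcon
  push_neg at hcon
  have hsub : G.neighborFinset a ⊆ {b1, b2} := by
    intro c hc
    rw [SimpleGraph.mem_neighborFinset] at hc
    rcases eq_or_ne c b1 with h | h
    · simp [h]
    · simp [hcon c hc h]
  have := Finset.card_le_card hsub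
  have h2 : ({b1, b2} : Finset V).card ≤ 2 := Finset.card_insert_le _ _ |>.trans (by simp)
  have := hdeg a
  rw [SimpleGraph.degree] at this
  omega

-- no tight cut is contained in a star of two edges at a vertex of S
lemma cut_not_star {G : SimpleGraph V} [Fintype V] [DecidableEq V]
    [DecidableRel G.Adj] (hmc : MatchingCovered G) (hdeg : ∀ v : V, 3 ≤ G.degree v)
    {S : Set V} (ht : IsTightCut G S) (a b1 b2 : V)
    (hsub : cutEdges G S ⊆ {s(a, b1), s(a, b2)}) : False := by
  obtain ⟨c, hac, hc1, hc2⟩ := exists_third_neighbor hdeg a b1 b2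
  obtain ⟨M, hM, heM⟩ := hmc.2.2 s(a, c) ((G.mem_edgeSet).mpr hac)
  obtain ⟨f, ⟨hfM, hfcut⟩, -⟩ := ht M hM
  obtain ⟨w, -, hwu⟩ := hM.1 (hM.2 a)
  have hcw : c = w := hwu c (SimpleGraph.Subgraph.mem_edgeSet.mp heM)
  rcases hsub hfcut with hf | hf
  · subst hf
    have : b1 = w := hwu b1 (SimpleGraph.Subgraph.mem_edgeSet.mp hfM)
    exact hc1 (hcw.trans this.symm)
  · subst hf
    have : b2 = w := hwu b2 (SimpleGraph.Subgraph.mem_edgeSet.mp hfM)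
    exact hc2 (hcw.trans this.symm)

-- classification of crossing edges when the cut has exactly two edges
lemma cross_neighbor {G : SimpleGraph V} {S : Set V} {a1 b1 a2 b2 : V}
    (hcut : cutEdges G S = {s(a1, b1), s(a2, b2)})
    (ha1 : a1 ∈ S) (hb1 : b1 ∉ S) (ha2 : a2 ∈ S) (hb2 : b2 ∉ S)
    {c z : V} (hadj : G.Adj c z) (hc : c ∈ S) (hz : z ∉ S) :
    (c = a1 ∧ z = b1) ∨ (c = a2 ∧ z = b2) := by
  have hmem : s(c, z) ∈ cutEdges G S := ⟨(G.mem_edgeSet).mpr hadj, c, z, rfl, hc, hz⟩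
  rw [hcut] at hmem
  simp only [Set.mem_insert_iff, Set.mem_singleton_iff] at hmem
  rcases hmem with h | h <;> rw [Sym2.eq_iff] at h <;> rcases h with ⟨h1, h2⟩ | ⟨h1, h2⟩
  · exact Or.inl ⟨h1, h2⟩
  · exact absurd (h1 ▸ hc) hb1
  · exact Or.inr ⟨h1, h2⟩
  · exact absurd (h1 ▸ hc) hb2

-- if the tight cut has exactly two independent edges, the complement is big
lemma compl_large {G : SimpleGraph V} [Fintype V] [DecidableEq V]
    [DecidableRel G.Adj] (hdeg : ∀ v : V, 3 ≤ G.degree v)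
    {S : Set V} {a1 b1 a2 b2 : V}
    (hcut : cutEdges G S = {s(a1, b1), s(a2, b2)})
    (ha1 : a1 ∈ S) (hb1 : b1 ∉ S) (ha2 : a2 ∈ S) (hb2 : b2 ∉ S)
    (hb12 : b1 ≠ b2) : 2 ≤ (Sᶜ \ {b1, b2}).ncard := by
  by_contra hcon
  push_neg at hcon
  have hss : ∀ x ∈ Sᶜ \ ({b1, b2} : Set V), ∀ y ∈ Sᶜ \ ({b1, b2} : Set V), x = y :=
    (Set.ncard_le_one (Set.toFinite _)).mp (by omega)
  by_cases hw : ∃ w, w ∈ Sᶜ \ ({b1, b2} : Set V)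
  · obtain ⟨w, hwmem⟩ := hw
    obtain ⟨hwS, hwb⟩ := hwmem
    rw [Set.mem_compl_iff] at hwS
    have hnb : G.neighborFinset w ⊆ {b1, b2} := by
      intro c hcmem
      rw [SimpleGraph.mem_neighborFinset] at hcmem
      by_cases hcS : c ∈ S
      · rcases cross_neighbor hcut ha1 hb1 ha2 hb2 hcmem.symm hcS hwS with ⟨-, h⟩ | ⟨-, h⟩ <;>
          exact absurd (by simp [h]) hwb
      · by_cases hcb : c ∈ ({b1, b2} : Set V)
        · simpa using hcb
        · exact absurd (hss c ⟨hcS, hcb⟩ w ⟨hwS, hwb⟩) hcmem.ne'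
    have := Finset.card_le_card hnb
    have h2 : ({b1, b2} : Finset V).card ≤ 2 := Finset.card_insert_le _ _ |>.trans (by simp)
    have := hdeg w
    rw [SimpleGraph.degree] at this
    omega
  · push_neg at hw
    have hall : ∀ z, z ∉ S → z = b1 ∨ z = b2 := by
      intro z hz
      have := hw z
      by_contra hzz
      push_neg at hzz
      exact this ⟨hz, by simp [hzz.1, hzz.2]⟩
    have hnb : G.neighborFinset b1 ⊆ {a1, b2} := by
      intro c hcmem
      rw [SimpleGraph.mem_neighborFinset] at hcmem
      by_cases hcS : c ∈ S
      · rcases cross_neighbor hcut ha1 hb1 ha2 hb2 hcmem.symm hcS hb1 with ⟨h, -⟩ | ⟨-, h⟩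
        · simp [h]
        · exact absurd h hb12
      · rcases hall c hcS with h | h
        · exact absurd h hcmem.ne'
        · simp [h]
    have := Finset.card_le_card hnb
    have h2 : ({a1, b2} : Finset V).card ≤ 2 := Finset.card_insert_le _ _ |>.trans (by simp)
    have := hdeg b1
    rw [SimpleGraph.degree] at this
    omega

-- if M uses the crossing edge a1b1, then M has a unique edge crossing S ∪ {b1, b2}
lemma tight_step {G : SimpleGraph V} {S : Set V} {a1 b1 b2 : V}
    {M : G.Subgraph} (hM : M.IsPerfectMatching)
    (ha1 : a1 ∈ S) (hb1 : b1 ∉ S) (hb2 : b2 ∉ S) (hb12 : b1 ≠ b2)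
    (he1M : s(a1, b1) ∈ M.edgeSet)
    (huniq : ∀ g, g ∈ M.edgeSet → g ∈ cutEdges G S → g = s(a1, b1)) :
    ∃! e, e ∈ M.edgeSet ∧ e ∈ cutEdges G (S ∪ {b1, b2}) := by
  have hb1a1 : M.Adj b1 a1 := (SimpleGraph.Subgraph.mem_edgeSet.mp he1M).symm
  obtain ⟨w, hw, hwu⟩ := hM.1 (hM.2 b2)
  obtain ⟨w1, -, hw1u⟩ := hM.1 (hM.2 b1)
  have hwS : w ∉ S := by
    intro hwS
    have hcut : s(b2, w) ∈ cutEdges G S :=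
      ⟨M.edgeSet_subset (SimpleGraph.Subgraph.mem_edgeSet.mpr hw), w, b2, Sym2.eq_swap, hwS, hb2⟩
    have := huniq s(b2, w) (SimpleGraph.Subgraph.mem_edgeSet.mpr hw) hcut
    rw [Sym2.eq_iff] at this
    rcases this with ⟨h1, -⟩ | ⟨h1, h2⟩
    · exact hb2 (h1 ▸ ha1)
    · exact hb12 h1.symm
  have hwb1 : w ≠ b1 := by
    intro h
    subst h
    have : a1 = b2 := (hw1u a1 hb1a1).trans (hw1u b2 hw.symm).symm
    exact hb2 (this ▸ ha1)
  have hwb2 : w ≠ b2 := (M.adj_sub hw).ne'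
  have hwY : w ∉ S ∪ ({b1, b2} : Set V) := by
    simp only [Set.mem_union, Set.mem_insert_iff, Set.mem_singleton_iff]
    push_neg
    exact ⟨hwS, hwb1, hwb2⟩
  refine ⟨s(b2, w), ⟨SimpleGraph.Subgraph.mem_edgeSet.mpr hw,
    M.edgeSet_subset (SimpleGraph.Subgraph.mem_edgeSet.mpr hw), b2, w, rfl, by simp, hwY⟩, ?_⟩
  rintro g ⟨hgM, -, x, y, rfl, hx, hy⟩
  have hyn : y ∉ S ∧ y ≠ b1 ∧ y ≠ b2 := by
    simp only [Set.mem_union, Set.mem_insert_iff, Set.mem_singleton_iff] at hy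
    push_neg at hy
    exact hy
  rcases Set.mem_union _ _ _ |>.mp hx with hxS | hxb
  · have := huniq s(x, y) hgM ⟨M.edgeSet_subset hgM, x, y, rfl, hxS, hyn.1⟩
    rw [Sym2.eq_iff] at this
    rcases this with ⟨-, h2⟩ | ⟨h1, -⟩
    · exact absurd h2 hyn.2.1
    · exact absurd (h1 ▸ hxS) hb1
  · simp only [Set.mem_insert_iff, Set.mem_singleton_iff] at hxb
    rcases hxb with rfl | rfl
    · have hadj : M.Adj x y := SimpleGraph.Subgraph.mem_edgeSet.mp hgM
      have : y = a1 := (hw1u y hadj).trans (hw1u a1 hb1a1).symm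
      exact absurd (this ▸ ha1) hyn.1
    · have hadj : M.Adj x y := SimpleGraph.Subgraph.mem_edgeSet.mp hgM
      rw [hwu y hadj]

lemma key {G : SimpleGraph V} [Fintype V] [DecidableEq V] [DecidableRel G.Adj]
    (hmc : MatchingCovered G) (hdeg : ∀ v : V, 3 ≤ G.degree v) :
    ∀ n (S : Set V), Sᶜ.ncard ≤ n → IsNontrivialCut S → IsTightCut G S →
      ∃ Y : Set V, IsNontrivialCut Y ∧ IsTightCut G Y ∧ 3 ≤ (cutEdges G Y).ncard := by
  intro n
  induction n with
  | zero => intro S hle hnt _; have := hnt.2; omega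
  | succ n ih =>
    intro S hle hnt ht
    by_cases h3 : 3 ≤ (cutEdges G S).ncard
    · exact ⟨S, hnt, ht, h3⟩
    have hSne : S.Nonempty := Set.nonempty_of_ncard_ne_zero (by have := hnt.1; omega)
    have hScne : Sᶜ.Nonempty := Set.nonempty_of_ncard_ne_zero (by have := hnt.2; omega)
    have hne : (cutEdges G S).Nonempty := cut_nonempty hmc.1 hSne hScne
    have h1 : 1 ≤ (cutEdges G S).ncard := (Set.ncard_pos (Set.toFinite _)).mpr hne
    have h12 : (cutEdges G S).ncard = 1 ∨ (cutEdges G S).ncard = 2 := by omega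
    rcases h12 with h12 | h12
    · obtain ⟨e, hce⟩ := Set.ncard_eq_one.mp h12
      have hecut : e ∈ cutEdges G S := hce ▸ Set.mem_singleton e
      obtain ⟨-, a, b, rfl, ha, hb⟩ := hecut
      exact absurd (cut_not_star hmc hdeg ht a b b
        (by rw [hce]; intro x hx; simp only [Set.mem_singleton_iff] at hx; simp [hx])) id
    · obtain ⟨e1, e2, hne12, hce⟩ := Set.ncard_eq_two.mp h12
      have he1cut : e1 ∈ cutEdges G S := hce ▸ Set.mem_insert _ _
      have he2cut : e2 ∈ cutEdges G S := hce ▸ Set.mem_insert_of_mem _ rfl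
      obtain ⟨-, a1, b1, rfl, ha1, hb1⟩ := he1cut
      obtain ⟨-, a2, b2, rfl, ha2, hb2⟩ := he2cut
      have hb12 : b1 ≠ b2 := by
        intro h
        subst h
        apply cut_not_star hmc hdeg (isTightCut_compl ht) b1 a1 a2
        rw [cutEdges_compl, hce]
        intro x hx
        simp only [Set.mem_insert_iff, Set.mem_singleton_iff] at hx ⊢
        rcases hx with rfl | rfl
        · exact Or.inl Sym2.eq_swap
        · exact Or.inr Sym2.eq_swap
      set Y := S ∪ ({b1, b2} : Set V) with hY
      have htY : IsTightCut G Y := by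
        intro M hM
        obtain ⟨f, ⟨hfM, hfc⟩, hfu⟩ := ht M hM
        have hf2 : f = s(a1, b1) ∨ f = s(a2, b2) := by
          rw [hce] at hfc; simpa using hfc
        rcases hf2 with rfl | rfl
        · exact tight_step hM ha1 hb1 hb2 hb12 hfM
            (fun g hg hgc => hfu g ⟨hg, hgc⟩)
        · have := tight_step hM ha2 hb2 hb1 hb12.symm hfM
            (fun g hg hgc => hfu g ⟨hg, hgc⟩)
          rwa [Set.pair_comm] at this
      have hYc : Yᶜ = Sᶜ \ ({b1, b2} : Set V) := by
        rw [hY, Set.compl_union, ← Set.diff_eq]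
      have hYnt : IsNontrivialCut Y := by
        constructor
        · exact le_trans hnt.1 (Set.ncard_le_ncard Set.subset_union_left (Set.toFinite _))
        · rw [hYc]
          exact compl_large hdeg hce ha1 hb1 ha2 hb2 hb12
      have hlt : Yᶜ.ncard < Sᶜ.ncard := by
        apply Set.ncard_lt_ncard _ (Set.toFinite _)
        constructor
        · exact Set.compl_subset_compl.mpr Set.subset_union_left
        · intro hsub
          have hb1Sc : b1 ∈ Sᶜ := hb1
          have := hsub hb1Sc
          rw [hYc] at this
          exact this.2 (by simp)
      exact ih Y (by omega) hYnt htY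


/-- A matching covered graph of minimum degree at least three having a
nontrivial tight cut has a nontrivial tight cut with at least three edges. -/
theorem exists_nontrivial_tight_cut_with_three_edges [Fintype V] [DecidableEq V]
    (G : SimpleGraph V) [DecidableRel G.Adj]
    (hmc : MatchingCovered G) (hdeg : ∀ v : V, 3 ≤ G.degree v)
    (h : ∃ S : Set V, IsNontrivialCut S ∧ IsTightCut G S) :
    ∃ Y : Set V, IsNontrivialCut Y ∧ IsTightCut G Y ∧ 3 ≤ (cutEdges G Y).ncard := by
  obtain ⟨S, hnt, ht⟩ := h
  exact key hmc hdeg Sᶜ.ncard S le_rfl hnt ht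
end

section
/- Let G be a matching covered finite simple graph and let ∂(S) be a nontrivial tight cut of G. If G contains no even conformal bicycle, then the graph obtained from G by contracting S to a single vertex also contains no even conformal bicycle. -/
open SimpleGraph

variable {V : Type*}

/-- A conformal bicycle: two vertex-disjoint cycles whose complement
(in the vertex set) induces a subgraph having a perfect matching. -/
def IsConformalBicycle (G : SimpleGraph V) {a b : V} (c₁ : G.Walk a a) (c₂ : G.Walk b b) : Prop :=
  c₁.IsCycle ∧ c₂.IsCycle ∧ (∀ x ∈ c₁.support, x ∉ c₂.support) ∧
    ∃ M : G.Subgraph, M.IsMatching ∧ M.verts = {v | v ∉ c₁.support ∧ v ∉ c₂.support}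

def HasConformalBicycle (G : SimpleGraph V) : Prop :=
  ∃ (a b : V) (c₁ : G.Walk a a) (c₂ : G.Walk b b), IsConformalBicycle G c₁ c₂

def HasOddConformalBicycle (G : SimpleGraph V) : Prop :=
  ∃ (a b : V) (c₁ : G.Walk a a) (c₂ : G.Walk b b),
    IsConformalBicycle G c₁ c₂ ∧ Odd c₁.length ∧ Odd c₂.length

def HasEvenConformalBicycle (G : SimpleGraph V) : Prop :=
  ∃ (a b : V) (c₁ : G.Walk a a) (c₂ : G.Walk b b),
    IsConformalBicycle G c₁ c₂ ∧ Even c₁.length ∧ Even c₂.length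

/-- The graph obtained from `G` by contracting the vertex set `S` to the
single new vertex `none`. -/
def contractSet (G : SimpleGraph V) (S : Set V) : SimpleGraph (Option {v : V // v ∉ S}) :=
  SimpleGraph.fromRel (fun a b =>
    (∃ u w : {v : V // v ∉ S}, a = some u ∧ b = some w ∧ G.Adj ↑u ↑w) ∨
    (a = none ∧ ∃ w : {v : V // v ∉ S}, b = some w ∧ ∃ z ∈ S, G.Adj z ↑w))

/-!
Let `(c₁, c₂)` be an even conformal bicycle of `G / S`, with `M'` matching the remaining vertices.
By tightness, a perfect matching of `G` through a cut edge `zw` (`z ∈ S`) uses no other cut edge,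
so it matches `S - z` inside `S`.

If the contracted vertex lies on neither cycle, both cycles lift to `G`; it is matched by `M'`
along some cut edge `zw`, and a perfect matching through `zw` supplies the matching inside `S`.

If it lies on `c₁`, then `c₁` leaves `S` along cut edges `z₁w₁` and `z₂w₂`. Take perfect matchings
`Q₁ ∋ z₁w₁` and `Q₂ ∋ z₂w₂`. Starting at `z₁` and alternating `Q₂`- and `Q₁`-edges, one stays
inside `S` and can only stop at `z₂`, after an even number of steps. This path closes the lift
of `c₁` to an even cycle of `G`, and `Q₁` matches the vertices of `S` left over.
-/

namespace SimpleGraph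

variable {W X : Type*} {G : SimpleGraph W} {H : SimpleGraph X}

theorem Walk.exists_map_eq_of_support_subset_range (f : G ↪g H) {a b : W}
    (p : H.Walk (f a) (f b)) (hp : ∀ z ∈ p.support, z ∈ Set.range f) :
    ∃ q : G.Walk a b, q.map f.toHom = p := by
  suffices ∀ {x y} (p : H.Walk x y), (∀ z ∈ p.support, z ∈ Set.range f) →
      ∀ {a b} (ha : f a = x) (hb : f b = y), ∃ q : G.Walk a b, (q.map f.toHom).copy ha hb = p from
    this p hp rfl rfl
  intro x y p hp
  induction p with
  | nil =>
    intro a b ha hb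
    obtain rfl := f.injective (ha.trans hb.symm)
    subst ha
    exact ⟨.nil, rfl⟩
  | @cons x v y h p ih =>
    intro a b ha hb
    obtain ⟨c, rfl⟩ := hp v (by simp)
    subst ha hb
    obtain ⟨q, hq⟩ := ih (fun z hz => hp z (by simp [hz])) rfl rfl
    exact ⟨.cons (f.map_adj_iff.mp h) q, by simpa using hq⟩

theorem Walk.mem_support_map_iff (f : G ↪g H) {a b : W} (q : G.Walk a b) {x : W} :
    f x ∈ (q.map f.toHom).support ↔ x ∈ q.support := by
  simp

theorem Walk.IsCycle.exists_isPath_between_neighbors {u : X} {c : H.Walk u u} (hc : c.IsCycle) :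
    ∃ v w, H.Adj u v ∧ H.Adj u w ∧ ∃ p : H.Walk v w, p.IsPath ∧ u ∉ p.support ∧
      c.length = p.length + 2 ∧ ∀ x, x ∈ c.support ↔ x = u ∨ x ∈ p.support := by
  cases c with
  | nil => exact (Walk.not_isCycle_nil hc).elim
  | cons h p =>
    obtain ⟨hp, -⟩ := (Walk.cons_isCycle_iff p h).mp hc
    obtain ⟨w, h', q, hq⟩ := Walk.not_nil_iff.mp (p.reverse.not_nil_of_ne h.ne)
    have hpath := hp.reverse
    rw [hq, Walk.cons_isPath_iff] at hpath
    refine ⟨_, _, h', h, q, hpath.1, hpath.2, ?_, fun x => ?_⟩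
    · rw [Walk.length_cons, ← Walk.length_reverse, hq, Walk.length_cons]
    · have hmem : x ∈ p.support ↔ x ∈ p.reverse.support := by simp
      rw [Walk.support_cons, List.mem_cons, hmem, hq, Walk.support_cons, List.mem_cons,
        ← or_assoc, or_self]

/-- `f` and `g` are the partner maps of two perfect matchings; the path follows `g`, `f`, `g`, …
from `c`, and every round removes two vertices of `A`. -/
theorem exists_even_isPath_alternating [DecidableEq W] {f g : W → W} (hf : Function.Involutive f)
    (hg : Function.Involutive g) (hfG : ∀ x, G.Adj x (f x)) (hgG : ∀ x, G.Adj x (g x))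
    (A : Finset W) {c z : W} (hc : c ∈ A) (hz : z ∈ A) (hfA : ∀ v ∈ A, v ≠ c → f v ∈ A)
    (hgA : ∀ v ∈ A, v ≠ z → g v ∈ A) (hfc : f c ∉ A) (hgz : g z ∉ A) :
    ∃ R : G.Walk c z, R.IsPath ∧ Even R.length ∧ (∀ x ∈ R.support, x ∈ A) ∧
      ∀ v ∈ A, v ∉ R.support → f v ∉ R.support := by
  induction A using Finset.strongInduction generalizing c with
  | H A ih =>
  by_cases hcz : c = z
  · subst hcz
    refine ⟨.nil, by simp, by simp, by simpa using hc, fun v hv hvc hfv => ?_⟩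
    simp only [Walk.support_nil, List.mem_singleton] at hvc hfv
    exact hfc (hf.eq_iff.mp hfv ▸ hv)
  set m := g c
  set c' := f m
  have hm : m ∈ A := hgA c hc hcz
  have hmc : m ≠ c := (hgG c).ne.symm
  have hc'm : c' ≠ m := (hfG m).ne.symm
  have hmz : m ≠ z := fun h => hgz (by rw [← h, hg c]; exact hc)
  have hc'c : c' ≠ c := fun h => hfc (by rw [← h, hf m]; exact hm)
  set A' := (A.erase c).erase m
  have hmemA' : ∀ {v}, v ∈ A' ↔ v ≠ m ∧ v ≠ c ∧ v ∈ A := by simp [A']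
  have hA' : A' ⊂ A := (Finset.erase_subset _ _).trans_ssubset (Finset.erase_ssubset hc)
  have hfA' : ∀ v ∈ A', v ≠ c' → f v ∈ A' := by
    simp only [hmemA']
    grind [Function.Involutive]
  have hgA' : ∀ v ∈ A', v ≠ z → g v ∈ A' := by
    simp only [hmemA']
    grind [Function.Involutive]
  obtain ⟨R, hRpath, hReven, hRA', hRf⟩ := ih A' hA' (hmemA'.mpr ⟨hc'm, hc'c, hfA m hm hmc⟩)
    (hmemA'.mpr ⟨hmz.symm, Ne.symm hcz, hz⟩) hfA' hgA' (by simp [c', hf m, hmemA'])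
    (fun h => hgz (hmemA'.mp h).2.2)
  refine ⟨.cons (hgG c) (.cons (hfG m) R), ?_, ?_, ?_, ?_⟩
  · simp only [Walk.cons_isPath_iff, Walk.support_cons, List.mem_cons, not_or]
    exact ⟨⟨hRpath, fun h => (hmemA'.mp (hRA' m h)).1 rfl⟩, Ne.symm hmc,
      fun h => (hmemA'.mp (hRA' c h)).2.1 rfl⟩
  · simpa [Walk.length_cons, Nat.even_add_one] using hReven
  · simp only [Walk.support_cons, List.mem_cons]
    rintro x (rfl | rfl | hx)
    exacts [hc, hm, (hmemA'.mp (hRA' x hx)).2.2]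
  · simp only [Walk.support_cons, List.mem_cons, not_or]
    rintro v hv ⟨hvc, hvm, hvR⟩
    refine ⟨fun h => hfc (by rwa [← h, hf v]), fun h => hvR ?_,
      hRf v (hmemA'.mpr ⟨hvm, hvc, hv⟩) hvR⟩
    rw [← hf v, h]
    exact R.start_mem_support

theorem Walk.IsPath.exists_isCycle_of_disjoint {a b c d : W} {P : G.Walk a b} {R : G.Walk c d}
    (hP : P.IsPath) (hR : R.IsPath) (hPR : P.support.Disjoint R.support) (hP₀ : ¬P.Nil)
    (h₁ : G.Adj d a) (h₂ : G.Adj b c) :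
    ∃ D : G.Walk d d, D.IsCycle ∧ D.length = P.length + R.length + 2 ∧
      ∀ x, x ∈ D.support ↔ x ∈ P.support ∨ x ∈ R.support := by
  refine ⟨(Walk.cons h₁ P).append (Walk.cons h₂ R), ?_, by simp; omega, fun x => ?_⟩
  · refine Walk.IsPath.isCycle_append ?_ ?_ (by simpa using hPR) (Or.inl ?_)
    · exact (Walk.cons_isPath_iff _ _).mpr ⟨hP, fun h => hPR h R.end_mem_support⟩
    · exact (Walk.cons_isPath_iff _ _).mpr ⟨hR, fun h => hPR P.end_mem_support h⟩
    · simpa [Walk.not_nil_iff_lt_length] using hP₀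
  · simp only [Walk.mem_support_append_iff, Walk.support_cons, List.mem_cons]
    have := R.end_mem_support
    have := P.end_mem_support
    grind

theorem Subgraph.IsPerfectMatching.exists_involutive {M : G.Subgraph} (hM : M.IsPerfectMatching) :
    ∃ f : W → W, Function.Involutive f ∧ ∀ v w, M.Adj v w ↔ w = f v := by
  choose f hf using Subgraph.isPerfectMatching_iff.mp hM
  have hadj v w : M.Adj v w ↔ w = f v := ⟨(hf v).2 w, fun h => h ▸ (hf v).1⟩
  exact ⟨f, fun v => (((hadj _ _).mp ((hadj v _).mpr rfl).symm)).symm, hadj⟩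

end SimpleGraph

variable {G : SimpleGraph V} {S : Set V}

theorem IsTightCut.eq_of_adj (ht : IsTightCut G S) {Q : G.Subgraph} (hQ : Q.IsPerfectMatching)
    {z w x y : V} (hzw : Q.Adj z w) (hz : z ∈ S) (hw : w ∉ S) (hxy : Q.Adj x y) (hx : x ∈ S)
    (hy : y ∉ S) : x = z ∧ y = w := by
  obtain ⟨e, -, he⟩ := ht Q hQ
  have hcut {a b} (hab : Q.Adj a b) (ha : a ∈ S) (hb : b ∉ S) : s(a, b) = e :=
    he _ ⟨hab, Q.adj_sub hab, a, b, rfl, ha, hb⟩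
  rcases Sym2.eq_iff.mp ((hcut hxy hx hy).trans (hcut hzw hz hw).symm) with h | ⟨rfl, -⟩
  exacts [h, absurd hx hw]

theorem IsTightCut.mem_of_adj (ht : IsTightCut G S) {Q : G.Subgraph} (hQ : Q.IsPerfectMatching)
    {z w v y : V} (hzw : Q.Adj z w) (hz : z ∈ S) (hw : w ∉ S) (hvy : Q.Adj v y) (hv : v ∈ S)
    (hvz : v ≠ z) : y ∈ S :=
  by_contra fun hy => hvz (ht.eq_of_adj hQ hzw hz hw hvy hv hy).1

theorem IsTightCut.exists_even_isPath (ht : IsTightCut G S) (hS : S.Finite)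
    {Q₁ Q₂ : G.Subgraph} (hQ₁ : Q₁.IsPerfectMatching) (hQ₂ : Q₂.IsPerfectMatching) {z₁ w₁ z₂ w₂ : V}
    (hz₁ : z₁ ∈ S) (hw₁ : w₁ ∉ S) (hz₂ : z₂ ∈ S) (hw₂ : w₂ ∉ S) (h₁ : Q₁.Adj z₁ w₁)
    (h₂ : Q₂.Adj z₂ w₂) :
    ∃ R : G.Walk z₁ z₂, R.IsPath ∧ Even R.length ∧ (∀ x ∈ R.support, x ∈ S) ∧
      ∀ v ∈ S, v ∉ R.support → ∀ y, Q₁.Adj v y → y ∈ S ∧ y ∉ R.support := by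
  classical
  obtain ⟨f, hf, hQf⟩ := hQ₁.exists_involutive
  obtain ⟨g, hg, hQg⟩ := hQ₂.exists_involutive
  have hfS : ∀ v ∈ S, v ≠ z₁ → f v ∈ S := fun v hv hvz =>
    ht.mem_of_adj hQ₁ h₁ hz₁ hw₁ ((hQf v _).mpr rfl) hv hvz
  have hgS : ∀ v ∈ S, v ≠ z₂ → g v ∈ S := fun v hv hvz =>
    ht.mem_of_adj hQ₂ h₂ hz₂ hw₂ ((hQg v _).mpr rfl) hv hvz
  obtain ⟨R, hR, hReven, hRS, hRf⟩ := exists_even_isPath_alternating hf hg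
    (fun x => Q₁.adj_sub ((hQf x _).mpr rfl)) (fun x => Q₂.adj_sub ((hQg x _).mpr rfl))
    hS.toFinset (c := z₁) (z := z₂) (by simpa) (by simpa) (by simpa using hfS)
    (by simpa using hgS)
    (by simpa [← (hQf _ _).mp h₁]) (by simpa [← (hQg _ _).mp h₂])
  refine ⟨R, hR, hReven, by simpa using hRS, fun v hv hvR y hy => ?_⟩
  obtain rfl := (hQf v y).mp hy
  exact ⟨hfS v hv fun h => hvR (h ▸ R.start_mem_support), hRf v (by simpa) hvR⟩

theorem IsConformalBicycle.symm {a b : V} {c₁ : G.Walk a a} {c₂ : G.Walk b b}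
    (h : IsConformalBicycle G c₁ c₂) : IsConformalBicycle G c₂ c₁ := by
  obtain ⟨h₁, h₂, hdisj, M, hM, hverts⟩ := h
  exact ⟨h₂, h₁, fun x hx₂ hx₁ => hdisj x hx₁ hx₂, M, hM, by rw [hverts]; ext; exact and_comm⟩

theorem contractSet_adj_some {u w : {v : V // v ∉ S}} :
    (contractSet G S).Adj (some u) (some w) ↔ G.Adj u w := by
  simpa [contractSet, Subtype.ext_iff, u.2, w.2, G.adj_comm w.1] using G.ne_of_adj

theorem contractSet_adj_none {w : {v : V // v ∉ S}} :
    (contractSet G S).Adj none (some w) ↔ ∃ z ∈ S, G.Adj z w := by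
  simp [contractSet, Subtype.ext_iff, w.2]

def contractSetEmbedding (G : SimpleGraph V) (S : Set V) :
    G.comap (Function.Embedding.subtype (· ∉ S)) ↪g contractSet G S where
  toFun := some
  inj' := Option.some_injective _
  map_rel_iff' := contractSet_adj_some

theorem contractSetEmbedding_toHom_apply (u : {v : V // v ∉ S}) :
    (contractSetEmbedding G S).toHom u = some u :=
  rfl

theorem comap_subtype_toHom_apply (u : {v : V // v ∉ S}) :
    (Embedding.comap (Function.Embedding.subtype (· ∉ S)) G).toHom u = u :=
  rfl

theorem exists_map_contractSetEmbedding_eq {a b : {v : V // v ∉ S}}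
    (c : (contractSet G S).Walk (some a) (some b)) (hn : none ∉ c.support) :
    ∃ q : (G.comap (Function.Embedding.subtype (· ∉ S))).Walk a b,
      (q.map (contractSetEmbedding G S).toHom).copy (contractSetEmbedding_toHom_apply a)
        (contractSetEmbedding_toHom_apply b) = c :=
  Walk.exists_map_eq_of_support_subset_range (contractSetEmbedding G S) c fun _ hz => by
    obtain ⟨u, rfl⟩ := Option.ne_none_iff_exists.mp (ne_of_mem_of_not_mem hz hn)
    exact ⟨u, rfl⟩

theorem exists_isCycle_lift_of_none_notMem {x : Option {v : V // v ∉ S}}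
    {c : (contractSet G S).Walk x x} (hc : c.IsCycle) (hn : none ∉ c.support) :
    ∃ (a : V) (C : G.Walk a a), C.IsCycle ∧ C.length = c.length ∧ (∀ v ∈ C.support, v ∉ S) ∧
      ∀ u : {v : V // v ∉ S}, (u : V) ∈ C.support ↔ some u ∈ c.support := by
  obtain ⟨a, rfl⟩ := Option.ne_none_iff_exists'.mp (ne_of_mem_of_not_mem c.start_mem_support hn)
  obtain ⟨q, rfl⟩ := exists_map_contractSetEmbedding_eq c hn
  let j := Embedding.comap (Function.Embedding.subtype (· ∉ S)) G
  refine ⟨a, (q.map j.toHom).copy (comap_subtype_toHom_apply a) (comap_subtype_toHom_apply a),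
    ?_, ?_, ?_, fun u => ?_⟩
  · rw [Walk.isCycle_copy] at hc ⊢
    exact (Walk.isCycle_map_iff_of_injective j.injective).mpr
      ((Walk.isCycle_map_iff_of_injective (contractSetEmbedding G S).injective).mp hc)
  · rw [Walk.length_copy, Walk.length_copy, Walk.length_map, Walk.length_map]
  · simp only [Walk.support_copy, Walk.support_map, List.mem_map]
    rintro _ ⟨u, -, rfl⟩
    exact u.2
  · simp only [Walk.support_copy]
    exact (Walk.mem_support_map_iff j q).trans (Walk.mem_support_map_iff _ q).symm

theorem exists_isPath_lift_of_none_mem {x : Option {v : V // v ∉ S}}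
    {c : (contractSet G S).Walk x x} (hc : c.IsCycle) (hn : none ∈ c.support) :
    ∃ (w₁ w₂ : {v : V // v ∉ S}) (z₁ z₂ : V), z₁ ∈ S ∧ z₂ ∈ S ∧ G.Adj z₁ w₁ ∧ G.Adj z₂ w₂ ∧
      ∃ P : G.Walk w₁ w₂, P.IsPath ∧ ¬P.Nil ∧ c.length = P.length + 2 ∧
        (∀ v ∈ P.support, v ∉ S) ∧
        ∀ u : {v : V // v ∉ S}, (u : V) ∈ P.support ↔ some u ∈ c.support := by
  classical
  obtain ⟨w₁, w₂, h₁, h₂, p, hp, hnp, hlen, hmem⟩ := (hc.rotate hn).exists_isPath_between_neighbors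
  obtain ⟨w₁, rfl⟩ := Option.ne_none_iff_exists'.mp h₁.ne.symm
  obtain ⟨w₂, rfl⟩ := Option.ne_none_iff_exists'.mp h₂.ne.symm
  obtain ⟨z₁, hz₁, hz₁w₁⟩ := contractSet_adj_none.mp h₁
  obtain ⟨z₂, hz₂, hz₂w₂⟩ := contractSet_adj_none.mp h₂
  obtain ⟨q, rfl⟩ := exists_map_contractSetEmbedding_eq p hnp
  let j := Embedding.comap (Function.Embedding.subtype (· ∉ S)) G
  simp only [Walk.isPath_copy, Walk.length_copy, Walk.length_rotate, Walk.length_map,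
    Walk.support_copy] at hp hlen hmem
  refine ⟨w₁, w₂, z₁, z₂, hz₁, hz₂, hz₁w₁, hz₂w₂,
    (q.map j.toHom).copy (comap_subtype_toHom_apply w₁) (comap_subtype_toHom_apply w₂),
    ?_, ?_, by rw [Walk.length_copy, Walk.length_map]; exact hlen, ?_, fun u => ?_⟩
  · rw [Walk.isPath_copy]
    exact (Walk.isPath_map_iff_of_injective j.injective).mpr
      ((Walk.isPath_map_iff_of_injective (contractSetEmbedding G S).injective).mp hp)
  · have := hc.three_le_length
    rw [Walk.nil_copy, Walk.not_nil_iff_lt_length, Walk.length_map]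
    omega
  · simp only [Walk.support_copy, Walk.support_map, List.mem_map]
    rintro _ ⟨u, -, rfl⟩
    exact u.2
  · rw [Walk.support_copy]
    refine (Walk.mem_support_map_iff _ q).trans ?_
    rw [← Walk.mem_support_map_iff (contractSetEmbedding G S) q,
      ← Walk.mem_support_rotate_iff c none hn, hmem]
    exact ⟨Or.inr, fun h => h.resolve_left (Option.some_ne_none u)⟩

/-- The matching is `M'` away from `S` and `Q` at `S`; `hcut` says that the two agree on which
vertex outside `S` is matched into `S`. -/
theorem exists_isMatching_of_contractSet {Q : G.Subgraph} (hQ : Q.IsPerfectMatching)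
    {M' : (contractSet G S).Subgraph} (hM' : M'.IsMatching) {X : Set V}
    (hQX : ∀ v ∈ X, ∀ y, Q.Adj v y → v ∈ S ∨ y ∈ S → y ∈ X)
    (hM'X : ∀ u : {v : V // v ∉ S}, some u ∈ M'.verts ↔ (u : V) ∈ X)
    (hcut : ∀ u : {v : V // v ∉ S}, (u : V) ∈ X → (M'.Adj (some u) none ↔ ∃ z ∈ S, Q.Adj u z)) :
    ∃ M : G.Subgraph, M.IsMatching ∧ M.verts = X := by
  refine ⟨{ verts := X
            Adj := fun x y => x ∈ X ∧ y ∈ X ∧ ((x ∈ S ∨ y ∈ S) ∧ Q.Adj x y ∨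
              ∃ (hx : x ∉ S) (hy : y ∉ S), M'.Adj (some ⟨x, hx⟩) (some ⟨y, hy⟩))
            adj_sub := ?_
            edge_vert := fun h => h.1
            symm := ?_ }, ?_, rfl⟩
  · rintro x y ⟨-, -, ⟨-, h⟩ | ⟨hx, hy, h⟩⟩
    exacts [Q.adj_sub h, contractSet_adj_some.mp (M'.adj_sub h)]
  · constructor
    rintro x y ⟨hx, hy, ⟨hxy, h⟩ | ⟨hx', hy', h⟩⟩
    exacts [⟨hy, hx, Or.inl ⟨hxy.symm, h.symm⟩⟩, ⟨hy, hx, Or.inr ⟨hy', hx', h.symm⟩⟩]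
  intro v hv
  obtain ⟨y, hy, hyu⟩ := Subgraph.isPerfectMatching_iff.mp hQ v
  by_cases hvy : v ∈ S ∨ y ∈ S
  · refine ⟨y, ⟨hv, hQX v hv y hy hvy, Or.inl ⟨hvy, hy⟩⟩, ?_⟩
    rintro y' ⟨-, -, ⟨-, hy'⟩ | ⟨hvS, hy'S, hM⟩⟩
    · exact hyu y' hy'
    · have hyS := hvy.resolve_left hvS
      have hnone := (hcut ⟨v, hvS⟩ hv).mpr ⟨y, hyS, hy⟩
      exact absurd (hM'.eq_of_adj_left hM hnone) (Option.some_ne_none _)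
  push Not at hvy
  obtain ⟨x, hx, hxu⟩ := hM' ((hM'X ⟨v, hvy.1⟩).mpr hv)
  obtain ⟨u, rfl⟩ : ∃ u, x = some u := by
    refine Option.ne_none_iff_exists'.mp fun hxn => ?_
    obtain ⟨z, hz, hvz⟩ := (hcut ⟨v, hvy.1⟩ hv).mp (hxn ▸ hx)
    exact hvy.2 (hyu z hvz ▸ hz)
  refine ⟨u, ⟨hv, (hM'X u).mp (M'.edge_vert hx.symm), Or.inr ⟨hvy.1, u.2, hx⟩⟩, ?_⟩
  rintro y' ⟨-, -, ⟨hS, hy'⟩ | ⟨_, _, hM⟩⟩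
  · exact absurd (hyu y' hy' ▸ hS) (not_or.mpr hvy)
  · exact congrArg Subtype.val (Option.some_injective _ (hxu _ hM))

theorem hasEvenConformalBicycle_of_contractSet_of_none_notMem
    (hcov : ∀ e ∈ G.edgeSet, ∃ M : G.Subgraph, M.IsPerfectMatching ∧ e ∈ M.edgeSet)
    (ht : IsTightCut G S) {a b : Option {v : V // v ∉ S}} {c₁ : (contractSet G S).Walk a a}
    {c₂ : (contractSet G S).Walk b b} (hc : IsConformalBicycle (contractSet G S) c₁ c₂)
    (he₁ : Even c₁.length) (he₂ : Even c₂.length) (hn₁ : none ∉ c₁.support)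
    (hn₂ : none ∉ c₂.support) : HasEvenConformalBicycle G := by
  obtain ⟨hcyc₁, hcyc₂, hdisj, M', hM', hverts⟩ := hc
  obtain ⟨_, C₁, hC₁, hlen₁, hS₁, hmem₁⟩ := exists_isCycle_lift_of_none_notMem hcyc₁ hn₁
  obtain ⟨_, C₂, hC₂, hlen₂, hS₂, hmem₂⟩ := exists_isCycle_lift_of_none_notMem hcyc₂ hn₂
  obtain ⟨y, hy, -⟩ := hM' (hverts ▸ ⟨hn₁, hn₂⟩ : none ∈ M'.verts)
  obtain ⟨w, rfl⟩ := Option.ne_none_iff_exists'.mp (M'.adj_sub hy).ne.symm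
  obtain ⟨z, hz, hzw⟩ := contractSet_adj_none.mp (M'.adj_sub hy)
  obtain ⟨Q, hQ, hzwQ⟩ := hcov s(z, w) hzw
  rw [Subgraph.mem_edgeSet] at hzwQ
  set X := {v | v ∉ C₁.support ∧ v ∉ C₂.support}
  have hM'X (u : {v : V // v ∉ S}) : some u ∈ M'.verts ↔ (u : V) ∈ X := by
    simp [X, hverts, hmem₁, hmem₂]
  have hQX : ∀ v ∈ X, ∀ y, Q.Adj v y → v ∈ S ∨ y ∈ S → y ∈ X := by
    intro v hv y hvy hvyS
    by_cases hyS : y ∈ S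
    · exact ⟨fun h => hS₁ y h hyS, fun h => hS₂ y h hyS⟩
    obtain ⟨rfl, rfl⟩ := ht.eq_of_adj hQ hzwQ hz w.2 hvy (hvyS.resolve_right hyS) hyS
    exact (hM'X w).mp (M'.edge_vert hy.symm)
  have hcut (u : {v : V // v ∉ S}) : M'.Adj (some u) none ↔ ∃ z ∈ S, Q.Adj u z := by
    refine ⟨fun h => ?_, fun ⟨z', hz', huz'⟩ => ?_⟩
    · obtain rfl := Option.some_injective _ (hM'.eq_of_adj_left hy h.symm)
      exact ⟨z, hz, hzwQ.symm⟩
    · obtain rfl := Subtype.ext (ht.eq_of_adj hQ hzwQ hz w.2 huz'.symm hz' u.2).2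
      exact hy.symm
  obtain ⟨M, hM, hMverts⟩ :=
    exists_isMatching_of_contractSet hQ hM' hQX hM'X fun u _ => hcut u
  refine ⟨_, _, C₁, C₂, ⟨hC₁, hC₂, fun x hx₁ hx₂ => ?_, M, hM, hMverts⟩, hlen₁ ▸ he₁, hlen₂ ▸ he₂⟩
  exact hdisj _ ((hmem₁ ⟨x, hS₁ x hx₁⟩).mp hx₁) ((hmem₂ ⟨x, hS₁ x hx₁⟩).mp hx₂)

theorem exists_even_isCycle_lift_of_none_mem
    (hcov : ∀ e ∈ G.edgeSet, ∃ M : G.Subgraph, M.IsPerfectMatching ∧ e ∈ M.edgeSet)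
    (ht : IsTightCut G S) (hS : S.Finite) {x : Option {v : V // v ∉ S}}
    {c : (contractSet G S).Walk x x} (hc : c.IsCycle) (he : Even c.length)
    (hn : none ∈ c.support) :
    ∃ (Q : G.Subgraph) (z w d : V) (D : G.Walk d d), Q.IsPerfectMatching ∧ Q.Adj z w ∧ z ∈ S ∧
      w ∉ S ∧ w ∈ D.support ∧ D.IsCycle ∧ Even D.length ∧
      (∀ u : {v : V // v ∉ S}, (u : V) ∈ D.support ↔ some u ∈ c.support) ∧
      ∀ v ∈ S, v ∉ D.support → ∀ y, Q.Adj v y → y ∈ S ∧ y ∉ D.support := by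
  obtain ⟨w₁, w₂, z₁, z₂, hz₁, hz₂, hzw₁, hzw₂, P, hP, hP₀, hlen, hPS, hmemP⟩ :=
    exists_isPath_lift_of_none_mem hc hn
  obtain ⟨Q₁, hQ₁, hzwQ₁⟩ := hcov s(z₁, w₁) hzw₁
  obtain ⟨Q₂, hQ₂, hzwQ₂⟩ := hcov s(z₂, w₂) hzw₂
  rw [Subgraph.mem_edgeSet] at hzwQ₁ hzwQ₂
  obtain ⟨R, hR, hReven, hRS, hRQ₁⟩ :=
    ht.exists_even_isPath hS hQ₁ hQ₂ hz₁ w₁.2 hz₂ w₂.2 hzwQ₁ hzwQ₂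
  obtain ⟨D, hD, hDlen, hmemD⟩ := hP.exists_isCycle_of_disjoint hR.reverse
    (fun x hxP hxR => hPS x hxP (hRS x (by simpa using hxR))) hP₀ hzw₁ hzw₂.symm
  simp only [Walk.support_reverse, List.mem_reverse, Walk.length_reverse] at hmemD hDlen
  have hPeven : Even P.length := (Nat.even_add.mp (hlen ▸ he)).mpr even_two
  refine ⟨Q₁, z₁, w₁, z₁, D, hQ₁, hzwQ₁, hz₁, w₁.2, (hmemD _).mpr (Or.inl P.start_mem_support),
    hD, hDlen ▸ (hPeven.add hReven).add even_two, fun u => ?_, fun v hv hvD y hvy => ?_⟩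
  · rw [hmemD, ← hmemP]
    exact or_iff_left fun h => u.2 (hRS _ h)
  · obtain ⟨hyS, hyR⟩ := hRQ₁ v hv (fun h => hvD ((hmemD v).mpr (Or.inr h))) y hvy
    exact ⟨hyS, fun h => ((hmemD y).mp h).elim (hPS y · hyS) hyR⟩

theorem hasEvenConformalBicycle_of_contractSet_of_none_mem
    (hcov : ∀ e ∈ G.edgeSet, ∃ M : G.Subgraph, M.IsPerfectMatching ∧ e ∈ M.edgeSet)
    (ht : IsTightCut G S) (hS : S.Finite) {a b : Option {v : V // v ∉ S}}
    {c₁ : (contractSet G S).Walk a a} {c₂ : (contractSet G S).Walk b b}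
    (hc : IsConformalBicycle (contractSet G S) c₁ c₂) (he₁ : Even c₁.length)
    (he₂ : Even c₂.length) (hn₁ : none ∈ c₁.support) : HasEvenConformalBicycle G := by
  obtain ⟨hcyc₁, hcyc₂, hdisj, M', hM', hverts⟩ := hc
  obtain ⟨Q, z, w, _, D, hQ, hzw, hz, hw, hwD, hD, hDeven, hmemD, hQD⟩ :=
    exists_even_isCycle_lift_of_none_mem hcov ht hS hcyc₁ he₁ hn₁
  obtain ⟨_, C₂, hC₂, hlen₂, hS₂, hmem₂⟩ := exists_isCycle_lift_of_none_notMem hcyc₂ (hdisj _ hn₁)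
  set X := {v | v ∉ D.support ∧ v ∉ C₂.support}
  have hM'X (u : {v : V // v ∉ S}) : some u ∈ M'.verts ↔ (u : V) ∈ X := by
    simp [X, hverts, hmemD, hmem₂]
  have hQX : ∀ v ∈ X, ∀ y, Q.Adj v y → v ∈ S ∨ y ∈ S → y ∈ X := by
    intro v ⟨hvD, hvC₂⟩ y hvy hvyS
    by_cases hvS : v ∈ S
    · obtain ⟨hyS, hyD⟩ := hQD v hvS hvD y hvy
      exact ⟨hyD, fun h => hS₂ y h hyS⟩
    obtain ⟨rfl, rfl⟩ := ht.eq_of_adj hQ hzw hz hw hvy.symm (hvyS.resolve_left hvS) hvS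
    exact absurd hwD hvD
  have hcut (u : {v : V // v ∉ S}) (hu : (u : V) ∈ X) :
      M'.Adj (some u) none ↔ ∃ z ∈ S, Q.Adj u z := by
    have hnone : none ∉ M'.verts := by simp [hverts, hn₁]
    refine iff_of_false (fun h => hnone (M'.edge_vert h.symm)) ?_
    rintro ⟨z', hz', huz'⟩
    exact hu.1 ((ht.eq_of_adj hQ hzw hz hw huz'.symm hz' u.2).2 ▸ hwD)
  obtain ⟨M, hM, hMverts⟩ := exists_isMatching_of_contractSet hQ hM' hQX hM'X hcut
  refine ⟨_, _, D, C₂, ⟨hD, hC₂, fun x hxD hx₂ => ?_, M, hM, hMverts⟩, hDeven, hlen₂ ▸ he₂⟩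
  exact hdisj _ ((hmemD ⟨x, hS₂ x hx₂⟩).mp hxD) ((hmem₂ ⟨x, hS₂ x hx₂⟩).mp hx₂)

theorem contract_tight_cut_no_even_conformal_bicycle_general [Fintype V]
    (G : SimpleGraph V) (S : Set V)
    (hmc : MatchingCovered G) (ht : IsTightCut G S)
    (h : ¬ HasEvenConformalBicycle G) :
    ¬ HasEvenConformalBicycle (contractSet G S) := by
  rintro ⟨a, b, c₁, c₂, hc, he₁, he₂⟩
  have hcov := hmc.2.2
  by_cases hn₁ : none ∈ c₁.support
  · exact h (hasEvenConformalBicycle_of_contractSet_of_none_mem hcov ht S.toFinite hc he₁ he₂ hn₁)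
  by_cases hn₂ : none ∈ c₂.support
  · exact h (hasEvenConformalBicycle_of_contractSet_of_none_mem hcov ht S.toFinite hc.symm he₂ he₁
      hn₂)
  exact h (hasEvenConformalBicycle_of_contractSet_of_none_notMem hcov ht hc he₁ he₂ hn₁ hn₂)

/-- Contracting a shore of a nontrivial tight cut preserves the absence of
even conformal bicycles. -/
theorem contract_tight_cut_no_even_conformal_bicycle [Fintype V]
    (G : SimpleGraph V) (S : Set V)
    (hmc : MatchingCovered G) (hnt : IsNontrivialCut S) (ht : IsTightCut G S)
    (h : ¬ HasEvenConformalBicycle G) :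
    ¬ HasEvenConformalBicycle (contractSet G S) :=
  contract_tight_cut_no_even_conformal_bicycle_general G S hmc ht h
end

section
/- Let k ≥ 2 and let G be the simple graph obtained from the odd wheel W_{2k+1} by adding an edge joining two nonadjacent rim vertices. Then G contains an odd conformal bicycle. -/
open SimpleGraph

variable {V : Type*}

/-- The odd wheel with `n` rim vertices: the join of a cycle on `ZMod n`
with the extra hub vertex `none`. -/
def oddWheel (n : ℕ) : SimpleGraph (Option (ZMod n)) :=
  SimpleGraph.fromRel (fun a b =>
    a = none ∨ ∃ i j : ZMod n, a = some i ∧ b = some j ∧ j = i + 1)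

/-!
The chord `s(i, j)` splits the rim of `W_{2k+1}` into two arcs of total length `2k + 1`, so one
of them, say from `a` to `a + t`, has even length `t` with `2 ≤ t ≤ 2k - 2`. Closed by the chord
it is an odd cycle of length `t + 1`; the hub with the next two rim vertices `a + t + 1`,
`a + t + 2` is a triangle; and the remaining rim vertices `a + t + 3, …, a - 1` are an even
number of consecutive vertices, matched in pairs along the rim.
-/

namespace SimpleGraph.Walk

variable {G : SimpleGraph V}

theorem IsPath.cons_isCycle_of_two_le_length {u v : V} {p : G.Walk v u} (hp : p.IsPath)
    (h : G.Adj u v) (hl : 2 ≤ p.length) : (cons h p).IsCycle := by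
  refine (cons_isCycle_iff p h).2 ⟨hp, fun he => ?_⟩
  have := hp.length_eq_one_of_mem_edges (Sym2.eq_swap ▸ he)
  omega

theorem IsPath.exists_isMatching_verts_eq_support_tail : ∀ {u v : V} {p : G.Walk u v},
    p.IsPath → Even p.length →
      ∃ M : G.Subgraph, M.IsMatching ∧ M.verts = {x | x ∈ p.support.tail}
  | _, _, .nil, _, _ => ⟨⊥, fun _ h => h.elim, by simp⟩
  | _, _, .cons _ .nil, _, he => by simp at he
  | _, _, .cons _ (.cons h q), hp, he => by
    have hp' := hp.of_cons
    obtain ⟨M, hM, hMverts⟩ := hp'.of_cons.exists_isMatching_verts_eq_support_tail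
      (by simpa [Nat.even_add_one] using he)
    have hedge := Subgraph.IsMatching.subgraphOfAdj h
    refine ⟨G.subgraphOfAdj h ⊔ M, hedge.sup hM ?_, ?_⟩
    · have hq := hp'.support_nodup
      rw [support_cons, ← cons_tail_support] at hq
      rw [hedge.support_eq_verts, hM.support_eq_verts, hMverts, subgraphOfAdj_verts]
      simp only [List.nodup_cons, List.mem_cons, not_or] at hq
      simp only [Set.disjoint_insert_left, Set.mem_ofPred_eq, Set.disjoint_singleton_left]
      tauto
    · ext x
      rw [Subgraph.verts_sup, subgraphOfAdj_verts, hMverts]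
      simp [mem_support_iff (p := q), or_assoc]

end SimpleGraph.Walk

namespace ZMod

theorem add_natCast_eq_iff_val_sub_eq {n : ℕ} [NeZero n] {a x : ZMod n} {k : ℕ} (hk : k < n) :
    a + k = x ↔ (x - a).val = k := by
  rw [← eq_sub_iff_add_eq', eq_comm]
  constructor
  · intro h; rw [h, val_cast_of_lt hk]
  · intro h; rw [← h, natCast_zmod_val]

end ZMod

namespace oddWheel

variable {n : ℕ}

theorem adj_some_iff {x y : ZMod n} :
    (oddWheel n).Adj (some x) (some y) ↔ x ≠ y ∧ (y = x + 1 ∨ x = y + 1) := by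
  simp [oddWheel, eq_comm]

theorem adj_none (x : ZMod n) : (oddWheel n).Adj none (some x) := by
  simp [oddWheel]

section Rim

variable [Fact (1 < n)]

theorem adj_add_one (x : ZMod n) : (oddWheel n).Adj (some x) (some (x + 1)) :=
  adj_some_iff.2 ⟨by simp, Or.inl rfl⟩

def rimArc (a : ZMod n) : (m : ℕ) → (oddWheel n).Walk (some a) (some (a + m))
  | 0 => Walk.nil.copy rfl (by simp)
  | m + 1 => (Walk.cons (adj_add_one a) (rimArc (a + 1) m)).copy rfl (by congr 1; push_cast; ring)

theorem support_rimArc (a : ZMod n) (m : ℕ) :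
    (rimArc a m).support = (List.range (m + 1)).map fun r : ℕ => some (a + r) := by
  induction m generalizing a with
  | zero => simp [rimArc]
  | succ m ih =>
    rw [rimArc, Walk.support_copy, Walk.support_cons, ih, List.range_succ_eq_map (n := m + 1)]
    simp [add_assoc, add_comm (1 : ZMod n)]

theorem length_rimArc (a : ZMod n) (m : ℕ) : (rimArc a m).length = m := by
  induction m generalizing a with
  | zero => simp [rimArc]
  | succ m ih => simp [rimArc, ih]

-- Rim vertices are located by their offset `(x - a).val < n` from a base point `a`;
-- `s + m < n` keeps the arc from wrapping around.
theorem some_mem_support_rimArc_iff {a b x : ZMod n} {s m : ℕ} (hb : b = a + s)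
    (hsm : s + m < n) :
    some x ∈ (rimArc b m).support ↔ s ≤ (x - a).val ∧ (x - a).val ≤ s + m := by
  subst hb
  simp only [support_rimArc, List.mem_map, List.mem_range, Option.some.injEq, add_assoc,
    ← Nat.cast_add]
  constructor
  · rintro ⟨r, hr, hx⟩
    rw [ZMod.add_natCast_eq_iff_val_sub_eq (by omega)] at hx
    omega
  · rintro ⟨h1, h2⟩
    refine ⟨(x - a).val - s, by omega, ?_⟩
    rw [ZMod.add_natCast_eq_iff_val_sub_eq (by omega)]
    omega

theorem some_mem_support_tail_rimArc_iff {a b x : ZMod n} {s m : ℕ} (hb : b = a + s)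
    (hsm : s + m < n) :
    some x ∈ (rimArc b m).support.tail ↔ s < (x - a).val ∧ (x - a).val ≤ s + m := by
  subst hb
  simp only [support_rimArc, List.range_succ_eq_map, List.map_cons, List.tail_cons, List.map_map,
    List.mem_map, List.mem_range, Function.comp_apply, Option.some.injEq, add_assoc,
    ← Nat.cast_add]
  constructor
  · rintro ⟨r, hr, hx⟩
    rw [ZMod.add_natCast_eq_iff_val_sub_eq (by omega)] at hx
    omega
  · rintro ⟨h1, h2⟩
    refine ⟨(x - a).val - s - 1, by omega, ?_⟩
    rw [ZMod.add_natCast_eq_iff_val_sub_eq (by omega)]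
    omega

theorem none_notMem_support_rimArc (a : ZMod n) (m : ℕ) : none ∉ (rimArc a m).support := by
  simp [support_rimArc]

theorem isPath_rimArc (a : ZMod n) {m : ℕ} (hm : m < n) : (rimArc a m).IsPath := by
  rw [Walk.isPath_def, support_rimArc]
  refine List.nodup_range.map_on fun r hr r' hr' h => ?_
  have := congrArg ZMod.val (add_left_cancel (Option.some_injective _ h))
  rw [List.mem_range] at hr hr'
  rwa [ZMod.val_cast_of_lt (by omega), ZMod.val_cast_of_lt (by omega)] at this

theorem exists_isMatching_verts_eq_image_some {G : SimpleGraph (Option (ZMod n))}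
    (hG : oddWheel n ≤ G) (a : ZMod n) {s m : ℕ} (hm : Even m)
    (hsm : s + m < n) :
    ∃ M : G.Subgraph, M.IsMatching ∧
      M.verts = some '' {x | s < (x - a).val ∧ (x - a).val ≤ s + m} := by
  obtain ⟨M, hM, hMverts⟩ := ((Walk.isPath_mapLe hG).2 (isPath_rimArc _ (by omega)))
    |>.exists_isMatching_verts_eq_support_tail
      (p := (rimArc (a + (s : ZMod n)) m).mapLe hG) (by simpa [length_rimArc])
  refine ⟨M, hM, ?_⟩
  ext (_ | x)
  · simpa [hMverts] using fun h => none_notMem_support_rimArc _ _ (List.mem_of_mem_tail h)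
  · simp [hMverts, some_mem_support_tail_rimArc_iff rfl hsm]

variable {G : SimpleGraph (Option (ZMod n))} (hG : oddWheel n ≤ G)

def chordCycle {a : ZMod n} {t : ℕ} (h : G.Adj (some a) (some (a + t))) :
    G.Walk (some a) (some a) :=
  .cons h ((rimArc a t).mapLe hG).reverse

def hubTriangle (b : ZMod n) : G.Walk none none :=
  .cons (hG (adj_none b)) (((rimArc b 1).mapLe hG).concat (hG (adj_none _)).symm)

variable {a : ZMod n} {t : ℕ} (h : G.Adj (some a) (some (a + t)))

theorem isCycle_chordCycle (ht2 : 2 ≤ t) (htn : t < n) : (chordCycle hG h).IsCycle :=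
  ((Walk.isPath_mapLe hG).2 (isPath_rimArc a htn)).reverse.cons_isCycle_of_two_le_length h
    (by simpa [length_rimArc] using ht2)

theorem length_chordCycle : (chordCycle hG h).length = t + 1 := by
  simp [chordCycle, length_rimArc]

theorem some_mem_support_chordCycle_iff {x : ZMod n} (htn : t < n) :
    some x ∈ (chordCycle hG h).support ↔ (x - a).val ≤ t := by
  simp only [chordCycle, Walk.support_cons, Walk.support_reverse, Walk.support_mapLe_eq_support,
    List.mem_cons, List.mem_reverse, Option.some.injEq,
    some_mem_support_rimArc_iff (a := a) (b := a) (s := 0) (by simp) (by omega : 0 + t < n)]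
  constructor
  · rintro (rfl | h) <;> simp_all
  · omega

theorem none_notMem_support_chordCycle : none ∉ (chordCycle hG h).support := by
  simp [chordCycle, none_notMem_support_rimArc]

theorem isCycle_hubTriangle (b : ZMod n) : (hubTriangle hG b).IsCycle := by
  refine Walk.IsPath.cons_isCycle_of_two_le_length ?_ _ (by simp [length_rimArc])
  refine ((Walk.isPath_mapLe hG).2 (isPath_rimArc b Fact.out)).concat ?_ _
  simpa using none_notMem_support_rimArc b 1

theorem length_hubTriangle (b : ZMod n) : (hubTriangle hG b).length = 3 := by
  simp [hubTriangle, length_rimArc]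

theorem some_mem_support_hubTriangle_iff {b x : ZMod n} {s : ℕ} (hb : b = a + s)
    (hs : s + 1 < n) :
    some x ∈ (hubTriangle hG b).support ↔ s ≤ (x - a).val ∧ (x - a).val ≤ s + 1 := by
  simp only [hubTriangle, Walk.support_cons, Walk.support_concat, Walk.support_mapLe_eq_support,
    List.mem_cons, List.mem_append, List.not_mem_nil, reduceCtorEq, false_or, or_false]
  exact some_mem_support_rimArc_iff hb hs

end Rim

theorem hasOddConformalBicycle_of_even_chord (hn : Odd n) {G : SimpleGraph (Option (ZMod n))}
    (hG : oddWheel n ≤ G) {a : ZMod n} {t : ℕ} (ht : Even t) (ht2 : 2 ≤ t) (htn : t + 3 ≤ n)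
    (h : G.Adj (some a) (some (a + t))) :
    HasOddConformalBicycle G := by
  have : Fact (1 < n) := ⟨by omega⟩
  have hrest : Even (n - t - 3) := by
    obtain ⟨p, rfl⟩ := hn
    obtain ⟨q, rfl⟩ := ht
    exact ⟨p - q - 1, by omega⟩
  obtain ⟨M, hM, hMverts⟩ :=
    exists_isMatching_verts_eq_image_some (s := t + 2) hG a hrest (by omega)
  refine ⟨_, _, chordCycle hG h, hubTriangle hG (a + ((t + 1 : ℕ) : ZMod n)),
    ⟨isCycle_chordCycle hG h ht2 (by omega), isCycle_hubTriangle hG _, ?_, M, hM, ?_⟩, ?_, ?_⟩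
  · rintro (_ | x) hx
    · exact absurd hx (none_notMem_support_chordCycle hG h)
    · rw [some_mem_support_chordCycle_iff hG h (by omega)] at hx
      rw [some_mem_support_hubTriangle_iff hG rfl (by omega)]
      omega
  · ext (_ | x)
    · simp [hMverts]
    · simp only [hMverts, (Option.some_injective _).mem_set_image, Set.mem_ofPred_eq,
        some_mem_support_chordCycle_iff hG h (by omega : t < n),
        some_mem_support_hubTriangle_iff hG (a := a) (s := t + 1) rfl (by omega)]
      have := (x - a).val_lt
      omega
  · simpa [length_chordCycle] using ht.add_one
  · rw [length_hubTriangle]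
    decide

theorem exists_even_arc_of_not_adj (hn : Odd n) {i j : ZMod n} (hij : i ≠ j)
    (hnadj : ¬ (oddWheel n).Adj (some i) (some j)) :
    ∃ (a : ZMod n) (t : ℕ), Even t ∧ 2 ≤ t ∧ t + 3 ≤ n ∧ s(a, a + t) = s(i, j) := by
  obtain ⟨m, rfl⟩ := hn
  have : NeZero (2 * m + 1) := ⟨by omega⟩
  set d := (j - i).val with hd
  have hdn : d < 2 * m + 1 := ZMod.val_lt _
  have hid : i + d = j := by rw [hd, ZMod.natCast_zmod_val]; ring
  have hd0 : d ≠ 0 := fun h => hij (by simpa [h] using hid)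
  have hd1 : d ≠ 1 := fun h =>
    hnadj (adj_some_iff.2 ⟨hij, .inl (by simpa [h] using hid.symm)⟩)
  have hdn1 : d ≠ 2 * m := by
    intro h
    have hneg : ((2 * m : ℕ) : ZMod (2 * m + 1)) = -1 := by
      rw [eq_neg_iff_add_eq_zero]
      exact_mod_cast ZMod.natCast_self (2 * m + 1)
    refine hnadj (adj_some_iff.2 ⟨hij, .inr ?_⟩)
    rw [← hid, h, hneg]
    ring
  rcases Nat.even_or_odd d with hde | hdo
  · exact ⟨i, d, hde, by omega, by obtain ⟨e, he⟩ := hde; omega, by rw [hid]⟩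
  · refine ⟨j, 2 * m + 1 - d, ?_, by omega, by obtain ⟨e, he⟩ := hdo; omega, ?_⟩
    · obtain ⟨e, he⟩ := hdo
      exact ⟨m - e, by omega⟩
    · have hji : j + ((2 * m + 1 - d : ℕ) : ZMod (2 * m + 1)) = i := by
        rw [Nat.cast_sub hdn.le, ZMod.natCast_self, ← hid]
        ring
      rw [hji, Sym2.eq_swap]

end oddWheel

theorem oddWheel_plus_edge_has_odd_conformal_bicycle_general (k : ℕ)
    (i j : ZMod (2 * k + 1)) (hij : i ≠ j)
    (hnadj : ¬ (oddWheel (2 * k + 1)).Adj (some i) (some j)) :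
    HasOddConformalBicycle
      (oddWheel (2 * k + 1) ⊔ SimpleGraph.fromEdgeSet {s(some i, some j)}) := by
  obtain ⟨a, t, ht, ht2, htn, hat⟩ := oddWheel.exists_even_arc_of_not_adj ⟨k, rfl⟩ hij hnadj
  refine oddWheel.hasOddConformalBicycle_of_even_chord (a := a) ⟨k, rfl⟩ le_sup_left ht ht2 htn
    (.inr ?_)
  rcases Sym2.eq_iff.1 hat with ⟨rfl, h⟩ | ⟨rfl, h⟩ <;>
    simp [h, hij, hij.symm, Sym2.eq_swap]

/-- Adding an edge joining two nonadjacent rim vertices of an odd wheel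
W_{2k+1} (k ≥ 2) creates an odd conformal bicycle. -/
theorem oddWheel_plus_edge_has_odd_conformal_bicycle (k : ℕ) (hk : 2 ≤ k)
    (i j : ZMod (2 * k + 1)) (hij : i ≠ j)
    (hnadj : ¬ (oddWheel (2 * k + 1)).Adj (some i) (some j)) :
    HasOddConformalBicycle
      (oddWheel (2 * k + 1) ⊔ SimpleGraph.fromEdgeSet {s(some i, some j)}) :=
  oddWheel_plus_edge_has_odd_conformal_bicycle_general k i j hij hnadj
end

section
/- For every n ≥ 4, the Möbius ladder on 2n vertices — that is, the circulant graph on ℤ/2nℤ in which i and j are adjacent iff i − j ∈ {1, −1, n} — contains an even conformal bicycle. -/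
open SimpleGraph

variable {V : Type*}

/-- The Möbius ladder on 2n vertices: i ~ j iff i - j ∈ {1, -1, n} in ℤ/2nℤ. -/
def mobiusLadder (n : ℕ) : SimpleGraph (ZMod (2 * n)) :=
  SimpleGraph.fromRel (fun a b => a - b = 1 ∨ a - b = (n : ZMod (2 * n)))

/-! Two consecutive rung squares `0, 1, n + 1, n` and `2, 3, n + 3, n + 2` are disjoint 4-cycles
once `n ≥ 4`. Both are closed under the involution `v ↦ v + n`, hence so is the set of remaining
vertices, and the rungs `{v, v + n}` lying in it form a perfect matching of it. -/

namespace SimpleGraph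

theorem exists_isMatching_verts_eq_of_involutive {G : SimpleGraph V} {σ : V → V}
    (hσ : Function.Involutive σ) (hadj : ∀ v, G.Adj v (σ v)) {S : Set V}
    (hS : ∀ v ∈ S, σ v ∈ S) : ∃ M : G.Subgraph, M.IsMatching ∧ M.verts = S := by
  let M : G.Subgraph :=
    { verts := S
      Adj := fun a b => a ∈ S ∧ b = σ a
      adj_sub := by rintro a _ ⟨-, rfl⟩; exact hadj a
      edge_vert := fun h => h.1
      symm := ⟨fun a b ⟨ha, hb⟩ => ⟨hb ▸ hS a ha, by rw [hb, hσ]⟩⟩ }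
  exact ⟨M, fun v hv => ⟨σ v, ⟨hv, rfl⟩, fun w hw => hw.2⟩, rfl⟩

end SimpleGraph

namespace ZMod

theorem natCast_inj_of_lt {m a b : ℕ} (ha : a < m) (hb : b < m) :
    (a : ZMod m) = b ↔ a = b := by
  rw [natCast_eq_natCast_iff', Nat.mod_eq_of_lt ha, Nat.mod_eq_of_lt hb]

theorem natCast_add_self (n : ℕ) : (n + n : ZMod (2 * n)) = 0 := by
  rw [← Nat.cast_add, ← two_mul, natCast_self]

theorem add_natCast_involutive (n : ℕ) : Function.Involutive (· + (n : ZMod (2 * n))) :=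
  fun v => by simp only [add_assoc, natCast_add_self, add_zero]

end ZMod

namespace MobiusLadder

variable {n : ℕ}

theorem adj_add_of_ne_zero {d : ZMod (2 * n)} (hd₀ : d ≠ 0) (hd : d = 1 ∨ d = n)
    (v : ZMod (2 * n)) : (mobiusLadder n).Adj v (v + d) := by
  rw [mobiusLadder, fromRel_adj]
  exact ⟨by simpa using hd₀, Or.inr (by simpa using hd)⟩

theorem adj_add_one (v : ZMod (2 * n)) : (mobiusLadder n).Adj v (v + 1) := by
  refine adj_add_of_ne_zero ?_ (Or.inl rfl) v
  rw [← Nat.cast_one, ne_eq, ZMod.natCast_eq_zero_iff, Nat.dvd_one]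
  omega

theorem adj_add_natCast (hn : n ≠ 0) (v : ZMod (2 * n)) : (mobiusLadder n).Adj v (v + n) := by
  refine adj_add_of_ne_zero ?_ (Or.inr rfl) v
  rw [ne_eq, ZMod.natCast_eq_zero_iff]
  exact Nat.not_dvd_of_pos_of_lt (Nat.pos_of_ne_zero hn) (by omega)

theorem adj_natCast_of_add_one_eq {a b : ℕ} (h : a + 1 = b) :
    (mobiusLadder n).Adj a b := by
  subst h
  simpa using adj_add_one (a : ZMod (2 * n))

theorem adj_natCast_of_add_eq (hn : n ≠ 0) {a b : ℕ} (h : a + n = b) :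
    (mobiusLadder n).Adj a b := by
  subst h
  simpa using adj_add_natCast hn (a : ZMod (2 * n))

def rungSquare (hn : n ≠ 0) (i : ℕ) : (mobiusLadder n).Walk i i :=
  .cons (adj_natCast_of_add_one_eq (b := i + 1) rfl) <|
  .cons (adj_natCast_of_add_eq hn (b := i + 1 + n) rfl) <|
  .cons (adj_natCast_of_add_one_eq (a := i + n) (by omega)).symm <|
  .cons (adj_natCast_of_add_eq hn rfl).symm .nil

theorem rungSquare_support (hn : n ≠ 0) (i : ℕ) :
    (rungSquare hn i).support = [(i : ZMod (2 * n)), ↑(i + 1), ↑(i + 1 + n), ↑(i + n), ↑i] :=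
  rfl

theorem rungSquare_length (hn : n ≠ 0) (i : ℕ) : (rungSquare hn i).length = 4 := rfl

theorem rungSquare_isCycle (hn : n ≠ 0) {i : ℕ} (hi : i + 1 < n) :
    (rungSquare hn i).IsCycle := by
  rw [rungSquare, Walk.cons_isCycle_iff, Walk.isPath_def]
  simp (disch := omega) only [Walk.support_cons, Walk.support_nil, Walk.edges_cons,
    Walk.edges_nil, List.nodup_cons, List.nodup_nil, List.mem_cons, List.not_mem_nil, Sym2.eq_iff,
    ZMod.natCast_inj_of_lt, and_true, true_and, or_false, not_false_eq_true]
  omega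

theorem rungSquare_support_disjoint (hn : n ≠ 0) {i j : ℕ} (hij : i + 1 < j) (hj : j + 1 < n) :
    ∀ x ∈ (rungSquare hn i).support, x ∉ (rungSquare hn j).support := by
  simp (disch := omega) only [rungSquare_support, List.mem_cons, List.not_mem_nil, or_false,
    forall_eq_or_imp, forall_eq, ZMod.natCast_inj_of_lt]
  omega

theorem add_natCast_mem_rungSquare_support (hn : n ≠ 0) (i : ℕ) {v : ZMod (2 * n)}
    (hv : v ∈ (rungSquare hn i).support) : v + n ∈ (rungSquare hn i).support := by
  simp only [rungSquare_support, List.mem_cons, List.not_mem_nil, or_false] at hv ⊢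
  rcases hv with rfl | rfl | rfl | rfl | rfl <;> push_cast <;>
    simp only [add_assoc, ZMod.natCast_add_self, add_zero, true_or, or_true]

theorem add_natCast_mem_rungSquare_support_iff (hn : n ≠ 0) (i : ℕ) {v : ZMod (2 * n)} :
    v + n ∈ (rungSquare hn i).support ↔ v ∈ (rungSquare hn i).support :=
  ⟨fun h => ZMod.add_natCast_involutive n v ▸ add_natCast_mem_rungSquare_support hn i h,
    add_natCast_mem_rungSquare_support hn i⟩

end MobiusLadder

open MobiusLadder in
/-- For n ≥ 4, the Möbius ladder on 2n vertices contains an even conformal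
bicycle. -/
theorem mobiusLadder_has_even_conformal_bicycle (n : ℕ) (hn : 4 ≤ n) :
    HasEvenConformalBicycle (mobiusLadder n) := by
  have hn₀ : n ≠ 0 := by omega
  obtain ⟨M, hM, hM_verts⟩ :=
    exists_isMatching_verts_eq_of_involutive (ZMod.add_natCast_involutive n) (adj_add_natCast hn₀)
      (S := {v | v ∉ (rungSquare hn₀ 0).support ∧ v ∉ (rungSquare hn₀ 2).support})
      (fun v hv => by
        simpa only [Set.mem_ofPred_eq, add_natCast_mem_rungSquare_support_iff] using hv)
  refine ⟨_, _, rungSquare hn₀ 0, rungSquare hn₀ 2,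
    ⟨rungSquare_isCycle hn₀ (by omega), rungSquare_isCycle hn₀ (by omega),
      rungSquare_support_disjoint hn₀ (by omega) (by omega), M, hM, hM_verts⟩, ?_, ?_⟩ <;>
  · rw [rungSquare_length]
    decide
end

section
/- Neither the Murty graph nor the graph K4 ⊙ K33 contains a conformal bicycle. -/
open SimpleGraph

variable {V : Type*}

/-- The Murty graph, with a1=0, a2=1, b1=2, b2=3, b3=4, t1=5, t2=6, t3=7. -/
def murtyGraph : SimpleGraph (Fin 8) :=
  SimpleGraph.fromRel (fun a b =>
    (a, b) ∈ [((0 : Fin 8), (2 : Fin 8)), (0, 3), (0, 4), (1, 2), (1, 3), (1, 4), (0, 1),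
      (2, 5), (3, 6), (4, 7), (5, 6), (6, 7), (7, 5)])

/-- The graph K4 ⊙ K33: the Murty graph minus the edge a1a2. -/
def K4spliceK33 : SimpleGraph (Fin 8) :=
  SimpleGraph.fromRel (fun a b =>
    (a, b) ∈ [((0 : Fin 8), (2 : Fin 8)), (0, 3), (0, 4), (1, 2), (1, 3), (1, 4),
      (2, 5), (3, 6), (4, 7), (5, 6), (6, 7), (7, 5)])

/-!
Only the 2-regularity of the two cycles matters, so the statement holds for every subgraph of the
Murty graph. Each `bⱼ` on a 2-regular subgraph has a neighbour `aᵢ` on it, so a 2-regular subgraph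
avoiding `{a₁, a₂}` is the triangle. A 2-regular subgraph avoiding the triangle contains `a₁` and
`a₂`, but not all three `bⱼ`, as `a₁` would then have three neighbours. So if one cycle avoids
`{a₁, a₂}`, some `bⱼ` lies on neither cycle while all its neighbours do, and the complement has no
perfect matching. Otherwise each cycle contains exactly one `aᵢ`, whose two neighbours on that cycle
are `bⱼ`'s: four distinct `bⱼ`, but there are only three.
-/

namespace SimpleGraph.Subgraph

variable {G : SimpleGraph V} {C : G.Subgraph} {v x y z : V}

def IsTwoRegular (C : G.Subgraph) : Prop :=
  ∀ v ∈ C.verts, (C.neighborSet v).ncard = 2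

lemma IsTwoRegular.exists_adj_adj (hC : C.IsTwoRegular) (hv : v ∈ C.verts) :
    ∃ x y, x ≠ y ∧ C.Adj v x ∧ C.Adj v y := by
  obtain ⟨x, y, hxy, hxy'⟩ := Set.ncard_eq_two.mp (hC v hv)
  refine ⟨x, y, hxy, ?_, ?_⟩
  · exact (C.mem_neighborSet v x).mp (hxy' ▸ Set.mem_insert x {y})
  · exact (C.mem_neighborSet v y).mp (hxy' ▸ Set.mem_insert_of_mem x rfl)

lemma IsTwoRegular.eq_or_eq_or_eq (hC : C.IsTwoRegular) (hx : C.Adj v x) (hy : C.Adj v y)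
    (hz : C.Adj v z) : x = y ∨ x = z ∨ y = z := by
  obtain ⟨p, q, -, hpq⟩ := Set.ncard_eq_two.mp (hC v hx.fst_mem)
  have hmem : ∀ w, C.Adj v w → w = p ∨ w = q := fun w hw => by
    simpa [hpq] using (C.mem_neighborSet v w).mpr hw
  rcases hmem x hx with rfl | rfl <;> rcases hmem y hy with rfl | rfl <;>
    rcases hmem z hz with rfl | rfl <;> simp

end SimpleGraph.Subgraph

lemma SimpleGraph.Walk.IsCycle.isTwoRegular_toSubgraph {G : SimpleGraph V} {u : V}
    {c : G.Walk u u} (hc : c.IsCycle) : c.toSubgraph.IsTwoRegular :=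
  fun _ hv => hc.ncard_neighborSet_toSubgraph_eq_two (c.mem_verts_toSubgraph.mp hv)

-- `{a₁, a₂}`, `{b₁, b₂, b₃}` and the triangle `{t₁, t₂, t₃}`; the triangle neighbour of `b`
-- is `b + 3`.
def murtyA : Finset (Fin 8) := {0, 1}
def murtyB : Finset (Fin 8) := {2, 3, 4}
def murtyT : Finset (Fin 8) := {5, 6, 7}

instance : DecidableRel murtyGraph.Adj := fun x y =>
  decidable_of_iff _ (fromRel_adj _ x y).symm

lemma mem_murtyA_or_mem_murtyB_or_mem_murtyT (v : Fin 8) :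
    v ∈ murtyA ∨ v ∈ murtyB ∨ v ∈ murtyT := by
  revert v; decide

lemma murtyGraph_adj_of_mem_murtyA {a x : Fin 8} (ha : a ∈ murtyA) (h : murtyGraph.Adj a x) :
    x ∈ murtyA ∨ x ∈ murtyB := by
  revert a x; decide

lemma murtyGraph_adj_of_mem_murtyB {b x : Fin 8} (hb : b ∈ murtyB) (h : murtyGraph.Adj b x) :
    x ∈ murtyA ∨ x = b + 3 := by
  revert b x; decide

lemma murtyGraph_adj_of_mem_murtyT {t x : Fin 8} (ht : t ∈ murtyT) (h : murtyGraph.Adj t x) :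
    x = t - 3 ∨ x ∈ murtyT := by
  revert t x; decide

lemma add_three_mem_murtyT {b : Fin 8} (hb : b ∈ murtyB) : b + 3 ∈ murtyT := by
  revert b; decide

lemma sub_three_mem_murtyB {t : Fin 8} (ht : t ∈ murtyT) : t - 3 ∈ murtyB := by
  revert t; decide

lemma K4spliceK33_le_murtyGraph : K4spliceK33 ≤ murtyGraph := by
  intro x y h
  rw [K4spliceK33, fromRel_adj] at h
  rw [murtyGraph, fromRel_adj]
  revert x y
  decide

section TwoRegularSubgraph

variable {G : SimpleGraph (Fin 8)} {C : G.Subgraph}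

lemma adj_zero_and_adj_one_of_mem_murtyB (hG : G ≤ murtyGraph) (hC : C.IsTwoRegular) {b : Fin 8}
    (hb : b ∈ murtyB) (hbC : b ∈ C.verts) (hbt : b + 3 ∉ C.verts) : C.Adj b 0 ∧ C.Adj b 1 := by
  obtain ⟨x, y, hxy, hx, hy⟩ := hC.exists_adj_adj hbC
  have hA : ∀ w, C.Adj b w → w ∈ murtyA := fun w hw =>
    (murtyGraph_adj_of_mem_murtyB hb (hG (C.adj_sub hw))).resolve_right
      fun h => hbt (h ▸ hw.snd_mem)
  have hx' := hA x hx
  have hy' := hA y hy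
  simp only [murtyA, Finset.mem_insert, Finset.mem_singleton] at hx' hy'
  rcases hx' with rfl | rfl <;> rcases hy' with rfl | rfl
  all_goals first | exact absurd rfl hxy | exact ⟨hx, hy⟩ | exact ⟨hy, hx⟩

lemma disjoint_murtyB_of_disjoint_murtyA (hG : G ≤ murtyGraph) (hC : C.IsTwoRegular)
    (hA : Disjoint C.verts murtyA) : Disjoint C.verts murtyB := by
  refine Set.disjoint_right.mpr fun b hb hbC => ?_
  obtain ⟨x, y, hxy, hx, hy⟩ := hC.exists_adj_adj hbC
  have hxA := Set.disjoint_left.mp hA hx.snd_mem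
  have hyA := Set.disjoint_left.mp hA hy.snd_mem
  rcases murtyGraph_adj_of_mem_murtyB hb (hG (C.adj_sub hx)) with hx' | rfl
  · exact hxA hx'
  rcases murtyGraph_adj_of_mem_murtyB hb (hG (C.adj_sub hy)) with hy' | rfl
  · exact hyA hy'
  exact hxy rfl

lemma murtyT_subset_of_disjoint_murtyA (hG : G ≤ murtyGraph) (hC : C.IsTwoRegular)
    (hA : Disjoint C.verts murtyA) (hne : C.verts.Nonempty) : ↑murtyT ⊆ C.verts := by
  have hB := disjoint_murtyB_of_disjoint_murtyA hG hC hA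
  obtain ⟨t, htC⟩ := hne
  have ht : t ∈ murtyT := by
    rcases mem_murtyA_or_mem_murtyB_or_mem_murtyT t with h | h | h
    · exact absurd h (Set.disjoint_left.mp hA htC)
    · exact absurd h (Set.disjoint_left.mp hB htC)
    · exact h
  have hT : ∀ w, C.Adj t w → w ∈ murtyT := fun w hw =>
    (murtyGraph_adj_of_mem_murtyT ht (hG (C.adj_sub hw))).resolve_left fun h =>
      Set.disjoint_left.mp hB hw.snd_mem (h ▸ sub_three_mem_murtyB ht)
  obtain ⟨x, y, hxy, hx, hy⟩ := hC.exists_adj_adj htC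
  have htriangle : ∀ t ∈ murtyT, ∀ x ∈ murtyT, ∀ y ∈ murtyT, x ≠ t → y ≠ t → x ≠ y →
      ∀ z ∈ murtyT, z = t ∨ z = x ∨ z = y := by decide
  intro z hz
  rcases htriangle t ht x (hT x hx) y (hT y hy) hx.ne.symm hy.ne.symm hxy z hz with rfl | rfl | rfl
  · exact htC
  · exact hx.snd_mem
  · exact hy.snd_mem

lemma exists_adj_mem_murtyB_of_mem_murtyA (hG : G ≤ murtyGraph) (hC : C.IsTwoRegular)
    {a : Fin 8} (ha : a ∈ murtyA) (haC : a ∈ C.verts) : ∃ b ∈ murtyB, C.Adj a b := by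
  obtain ⟨x, y, hxy, hx, hy⟩ := hC.exists_adj_adj haC
  have hA : ∀ a ∈ murtyA, ∀ x ∈ murtyA, ∀ y ∈ murtyA, x ≠ a → y ≠ a → x = y := by decide
  rcases murtyGraph_adj_of_mem_murtyA ha (hG (C.adj_sub hx)) with hxA | hxB
  · rcases murtyGraph_adj_of_mem_murtyA ha (hG (C.adj_sub hy)) with hyA | hyB
    · exact absurd (hA a ha x hxA y hyA hx.ne.symm hy.ne.symm) hxy
    · exact ⟨y, hyB, hy⟩
  · exact ⟨x, hxB, hx⟩

lemma murtyA_subset_of_disjoint_murtyT (hG : G ≤ murtyGraph) (hC : C.IsTwoRegular)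
    (hT : Disjoint C.verts murtyT) (hne : C.verts.Nonempty) : ↑murtyA ⊆ C.verts := by
  obtain ⟨b, hb, hbC⟩ : ∃ b ∈ murtyB, b ∈ C.verts := by
    obtain ⟨v, hvC⟩ := hne
    rcases mem_murtyA_or_mem_murtyB_or_mem_murtyT v with hv | hv | hv
    · obtain ⟨b, hb, hvb⟩ := exists_adj_mem_murtyB_of_mem_murtyA hG hC hv hvC
      exact ⟨b, hb, hvb.snd_mem⟩
    · exact ⟨v, hv, hvC⟩
    · exact absurd hv (Set.disjoint_left.mp hT hvC)
  have h01 := adj_zero_and_adj_one_of_mem_murtyB hG hC hb hbC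
    (Set.disjoint_right.mp hT (add_three_mem_murtyT hb))
  intro a ha
  simp only [murtyA, Finset.coe_insert, Finset.coe_singleton, Set.mem_insert_iff,
    Set.mem_singleton_iff] at ha
  rcases ha with rfl | rfl
  exacts [h01.1.snd_mem, h01.2.snd_mem]

lemma not_murtyB_subset_of_disjoint_murtyT (hG : G ≤ murtyGraph) (hC : C.IsTwoRegular)
    (hT : Disjoint C.verts murtyT) : ¬ ↑murtyB ⊆ C.verts := by
  intro hB
  have hadj : ∀ b ∈ murtyB, C.Adj 0 b := fun b hb =>
    (adj_zero_and_adj_one_of_mem_murtyB hG hC hb (hB hb)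
      (Set.disjoint_right.mp hT (add_three_mem_murtyT hb))).1.symm
  have := hC.eq_or_eq_or_eq (hadj 2 (by decide)) (hadj 3 (by decide)) (hadj 4 (by decide))
  simp at this

lemma two_le_ncard_inter_murtyB (hG : G ≤ murtyGraph) (hC : C.IsTwoRegular) {a a' : Fin 8}
    (ha : a ∈ murtyA) (ha' : a' ∈ murtyA) (haC : a ∈ C.verts) (ha'C : a' ∉ C.verts) :
    2 ≤ (C.verts ∩ murtyB).ncard := by
  obtain ⟨x, y, hxy, hx, hy⟩ := hC.exists_adj_adj haC
  have hB : ∀ w, C.Adj a w → w ∈ murtyB := fun w hw => by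
    have hA : ∀ a ∈ murtyA, ∀ a' ∈ murtyA, a ≠ a' → ∀ w ∈ murtyA, w = a ∨ w = a' := by decide
    refine (murtyGraph_adj_of_mem_murtyA ha (hG (C.adj_sub hw))).resolve_left fun hw' => ?_
    rcases hA a ha a' ha' (fun h => ha'C (h ▸ haC)) w hw' with rfl | rfl
    exacts [hw.ne rfl, ha'C hw.snd_mem]
  calc 2 = ({x, y} : Set (Fin 8)).ncard := (Set.ncard_pair hxy).symm
    _ ≤ (C.verts ∩ murtyB).ncard := by
      refine Set.ncard_le_ncard ?_
      rintro w (rfl | rfl)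
      exacts [⟨hx.snd_mem, hB w hx⟩, ⟨hy.snd_mem, hB w hy⟩]

variable {C₁ C₂ : G.Subgraph}

lemma exists_isolated_of_disjoint_murtyA (hG : G ≤ murtyGraph) (h₁ : C₁.IsTwoRegular)
    (h₂ : C₂.IsTwoRegular) (hne₁ : C₁.verts.Nonempty) (hne₂ : C₂.verts.Nonempty)
    (hdisj : Disjoint C₁.verts C₂.verts) (hA₁ : Disjoint C₁.verts murtyA) :
    ∃ v ∉ C₁.verts ∪ C₂.verts, ∀ w ∉ C₁.verts ∪ C₂.verts, ¬ G.Adj v w := by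
  have hT₁ := murtyT_subset_of_disjoint_murtyA hG h₁ hA₁ hne₁
  have hT₂ : Disjoint C₂.verts murtyT := hdisj.symm.mono_right hT₁
  have hA₂ := murtyA_subset_of_disjoint_murtyT hG h₂ hT₂ hne₂
  obtain ⟨b, hb, hb₂⟩ := Set.not_subset.mp (not_murtyB_subset_of_disjoint_murtyT hG h₂ hT₂)
  have hb₁ := Set.disjoint_right.mp (disjoint_murtyB_of_disjoint_murtyA hG h₁ hA₁) hb
  refine ⟨b, by simp [hb₁, hb₂], fun w hw hbw => hw ?_⟩
  rcases murtyGraph_adj_of_mem_murtyB hb (hG hbw) with hwA | rfl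
  exacts [Or.inr (hA₂ hwA), Or.inl (hT₁ (add_three_mem_murtyT hb))]

lemma exists_isolated_compl_of_isTwoRegular (hG : G ≤ murtyGraph) (h₁ : C₁.IsTwoRegular)
    (h₂ : C₂.IsTwoRegular) (hne₁ : C₁.verts.Nonempty) (hne₂ : C₂.verts.Nonempty)
    (hdisj : Disjoint C₁.verts C₂.verts) :
    ∃ v ∉ C₁.verts ∪ C₂.verts, ∀ w ∉ C₁.verts ∪ C₂.verts, ¬ G.Adj v w := by
  by_cases hA₁ : Disjoint C₁.verts murtyA
  · exact exists_isolated_of_disjoint_murtyA hG h₁ h₂ hne₁ hne₂ hdisj hA₁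
  by_cases hA₂ : Disjoint C₂.verts murtyA
  · rw [Set.union_comm]
    exact exists_isolated_of_disjoint_murtyA hG h₂ h₁ hne₂ hne₁ hdisj.symm hA₂
  exfalso
  obtain ⟨a₁, ha₁C, ha₁⟩ := Set.not_disjoint_iff.mp hA₁
  obtain ⟨a₂, ha₂C, ha₂⟩ := Set.not_disjoint_iff.mp hA₂
  have hB₁ := two_le_ncard_inter_murtyB hG h₁ ha₁ ha₂ ha₁C (Set.disjoint_right.mp hdisj ha₂C)
  have hB₂ := two_le_ncard_inter_murtyB hG h₂ ha₂ ha₁ ha₂C (Set.disjoint_left.mp hdisj ha₁C)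
  have : (C₁.verts ∩ murtyB ∪ C₂.verts ∩ murtyB).ncard ≤ 3 := by
    calc _ ≤ (murtyB : Set (Fin 8)).ncard :=
          Set.ncard_le_ncard (Set.union_subset Set.inter_subset_right Set.inter_subset_right)
      _ = 3 := by rw [Set.ncard_coe_finset]; rfl
  rw [Set.ncard_union_eq (hdisj.mono Set.inter_subset_left Set.inter_subset_left)] at this
  omega

end TwoRegularSubgraph

theorem not_hasConformalBicycle_of_le_murtyGraph {G : SimpleGraph (Fin 8)}
    (hG : G ≤ murtyGraph) : ¬ HasConformalBicycle G := by
  rintro ⟨_, _, c₁, c₂, hc₁, hc₂, hdisj, M, hM, hMv⟩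
  have hM_verts : ∀ v, v ∈ M.verts ↔ v ∉ c₁.toSubgraph.verts ∪ c₂.toSubgraph.verts := by
    simp [hMv]
  obtain ⟨v, hv, hiso⟩ := exists_isolated_compl_of_isTwoRegular hG
    hc₁.isTwoRegular_toSubgraph hc₂.isTwoRegular_toSubgraph
    ⟨_, c₁.start_mem_verts_toSubgraph⟩ ⟨_, c₂.start_mem_verts_toSubgraph⟩
    (Set.disjoint_left.mpr fun x hx => by
      simpa [Walk.mem_verts_toSubgraph] using hdisj x (c₁.mem_verts_toSubgraph.mp hx))
  obtain ⟨w, hvw, -⟩ := hM ((hM_verts v).mpr hv)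
  exact hiso w ((hM_verts w).mp hvw.snd_mem) (M.adj_sub hvw)

/-- Neither the Murty graph nor K4 ⊙ K33 contains a conformal bicycle. -/
theorem murty_K4spliceK33_no_conformal_bicycle :
    ¬ HasConformalBicycle murtyGraph ∧ ¬ HasConformalBicycle K4spliceK33 :=
  ⟨not_hasConformalBicycle_of_le_murtyGraph le_rfl,
    not_hasConformalBicycle_of_le_murtyGraph K4spliceK33_le_murtyGraph⟩
end
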